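/- arXiv:2201.05874 — 6 statements merged into one kernel-verified Lean document; each statement's English description precedes it below -/
import Mathlib

section
/- Let ‖·‖ be a norm on ℝ^d with unit ball U and let (u^i_1)_{i=1}^m, ..., (u^i_n)_{i=1}^m be n sequences of vectors in U whose union is a zero-sum sequence (i.e., ∑_{i=1}^m ∑_{j=1}^n u^i_j = 0). Then there exist permutations π_1,...,π_n of {1,...,m} such that for every k ∈ {1,...,m}, ‖∑_{i=1}^k ∑_{j=1}^n u^{π_j(i)}_j‖ ≤ n·d. -/
/-!
Put `v i := ∑ j, u i j`; then `∑ i, v i = 0` and `N (v i) ≤ n`, so it suffices to take all `π j`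
equal to a permutation given by the Steinitz lemma with constant `d` for the sequence `v`.

For the Steinitz lemma (Grinberg–Sevastyanov), call a set `A` of indices good if some weights
`y ∈ [0,1]^A` satisfy `∑ y = |A| - d` and `∑ y i • v i = 0`. For good `A`, writing
`∑_A v = ∑_A (1 - y i) • v i` bounds its seminorm by `d * C`. The full index set is good, and a
good nonempty `A` has an element whose removal leaves a good set: scale `y` to total `|A| - d - 1`
and pass to a vertex of the resulting polytope. A vertex has at most `d + 1` fractional
coordinates, since more would carry an affine dependence of the `v i` along which it could be
moved both ways; counting then shows that some coordinate vanishes. Removing elements one at a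
time from the full set and reading them off in reverse gives the permutation.
-/

open Finset Filter Topology Module

theorem List.exists_nodup_toFinset_eq_forall_take {ι : Type*} [DecidableEq ι]
    {P : Finset ι → Prop} (hP : ∀ A, A.Nonempty → P A → ∃ i ∈ A, P (A.erase i))
    (A : Finset ι) (hA : P A) :
    ∃ l : List ι, l.Nodup ∧ l.toFinset = A ∧ ∀ k, P (l.take k).toFinset := by
  induction A using Finset.strongInduction with
  | H A ih =>
  rcases A.eq_empty_or_nonempty with rfl | hne
  · exact ⟨[], List.nodup_nil, rfl, fun k => by simpa using hA⟩
  obtain ⟨i, hi, hPi⟩ := hP A hne hA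
  obtain ⟨l, hnd, hl, htake⟩ := ih _ (Finset.erase_ssubset hi) hPi
  have hil : i ∉ l := by simp [← List.mem_toFinset, hl]
  have hfin : (l ++ [i]).toFinset = A := by
    simp [hl, Finset.insert_erase hi]
  refine ⟨l ++ [i], hnd.append (List.nodup_singleton i) (by simpa using hil), hfin, fun k => ?_⟩
  rcases le_or_gt k l.length with hk | hk
  · rw [List.take_append_of_le_length hk]
    exact htake k
  · rw [List.take_of_length_le (by simp; omega), hfin]
    exact hA

theorem Equiv.Perm.exists_forall_map_filter_lt {m : ℕ} {P : Finset (Fin m) → Prop}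
    (hP : ∀ A, A.Nonempty → P A → ∃ i ∈ A, P (A.erase i)) (huniv : P univ) :
    ∃ π : Equiv.Perm (Fin m), ∀ k,
      P ((univ.filter fun i : Fin m => (i : ℕ) < k).map π.toEmbedding) := by
  obtain ⟨l, hnd, hl, htake⟩ := List.exists_nodup_toFinset_eq_forall_take hP univ huniv
  have hmem : ∀ x, x ∈ l := fun x => by simp [← List.mem_toFinset, hl]
  have hlen : l.length = m := by
    simpa [hl] using (List.toFinset_card_of_nodup hnd).symm
  refine ⟨(finCongr hlen.symm).trans (hnd.getEquivOfForallMemList l hmem), fun k => ?_⟩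
  convert htake k using 1
  ext x
  simp only [Finset.mem_map, Finset.mem_filter, Finset.mem_univ, true_and, List.mem_toFinset,
    List.mem_take_iff_getElem]
  constructor
  · rintro ⟨a, ha, rfl⟩
    exact ⟨a, by simp [ha, hlen], by simp⟩
  · rintro ⟨j, hj, rfl⟩
    exact ⟨⟨j, hlen ▸ (lt_min_iff.1 hj).2⟩, (lt_min_iff.1 hj).1, by simp⟩

section SteinitzPolytope

variable {ι E : Type*} [Fintype ι] [AddCommGroup E] [Module ℝ E]

def steinitzPolytope (v : ι → E) (A : Finset ι) (s : ℝ) : Set (ι → ℝ) :=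
  {y | (∀ i, y i ∈ Set.Icc 0 1) ∧ (∀ i ∉ A, y i = 0) ∧ ∑ i, y i = s ∧ ∑ i, y i • v i = 0}

noncomputable def fractionalIndices (y : ι → ℝ) : Finset ι :=
  {i | y i ∈ Set.Ioo 0 1}

variable {v : ι → E} {A : Finset ι} {s : ℝ} {y : ι → ℝ}

theorem fractionalIndices_subset (hyA : ∀ i ∉ A, y i = 0) : fractionalIndices y ⊆ A := by
  intro i hi
  by_contra hiA
  simp [fractionalIndices, hyA i hiA] at hi

theorem isCompact_steinitzPolytope : IsCompact (steinitzPolytope v A s) := by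
  refine (isCompact_univ_pi fun _ => isCompact_Icc (a := (0 : ℝ)) (b := 1)).of_isClosed_subset ?_
    fun y hy => Set.mem_univ_pi.2 hy.1
  have hker : IsClosed {y : ι → ℝ | ∑ i, y i • v i = 0} := by
    convert (LinearMap.ker (Fintype.linearCombination ℝ v)).closed_of_finiteDimensional using 1
    ext y
    simp [Fintype.linearCombination_apply]
  simp only [steinitzPolytope, Set.ofPred_and, Set.ofPred_forall]
  exact (isClosed_iInter fun i => isClosed_Icc.preimage (continuous_apply i)).inter <|
    (isClosed_iInter fun i => isClosed_iInter fun _ =>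
      isClosed_eq (continuous_apply i) continuous_const).inter <|
    (isClosed_eq (continuous_finsetSum _ fun i _ => continuous_apply i) continuous_const).inter
      hker

theorem one_mem_steinitzPolytope_univ (hsum : ∑ i, v i = 0) :
    1 ∈ steinitzPolytope v univ (Fintype.card ι) := by
  simp [steinitzPolytope, hsum]

theorem add_smul_mem_steinitzPolytope (hy : y ∈ steinitzPolytope v A s) {w : ι → ℝ}
    (hwA : ∀ i ∉ A, w i = 0) (hw_sum : ∑ i, w i = 0) (hw_v : ∑ i, w i • v i = 0) {t : ℝ}
    (ht : ∀ i, y i + t * w i ∈ Set.Icc 0 1) : y + t • w ∈ steinitzPolytope v A s := by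
  obtain ⟨-, hyA, hy_sum, hy_v⟩ := hy
  refine ⟨ht, fun i hi => by simp [hyA i hi, hwA i hi], ?_, ?_⟩
  · simp [Finset.sum_add_distrib, ← Finset.mul_sum, hy_sum, hw_sum]
  · simp [add_smul, mul_smul, Finset.sum_add_distrib, ← Finset.smul_sum, hy_v, hw_v]

theorem div_smul_mem_steinitzPolytope (hy : y ∈ steinitzPolytope v A s) {s' : ℝ}
    (hs' : 0 ≤ s') (hs's : s' ≤ s) : (s' / s) • y ∈ steinitzPolytope v A s' := by
  obtain ⟨hy01, hyA, hy_sum, hy_v⟩ := hy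
  have hr0 : 0 ≤ s' / s := div_nonneg hs' (hs'.trans hs's)
  have hr1 : s' / s ≤ 1 := div_le_one_of_le₀ hs's (hs'.trans hs's)
  refine ⟨fun i => ⟨mul_nonneg hr0 (hy01 i).1, mul_le_one₀ hr1 (hy01 i).1 (hy01 i).2⟩,
    fun i hi => by simp [hyA i hi], ?_, ?_⟩
  · simp only [Pi.smul_apply, smul_eq_mul, ← Finset.mul_sum, hy_sum]
    exact div_mul_cancel_of_imp fun hs => le_antisymm (hs ▸ hs's) hs'
  · simp [mul_smul, ← Finset.smul_sum, hy_v]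

theorem mem_steinitzPolytope_erase [DecidableEq ι] (hy : y ∈ steinitzPolytope v A s) {i : ι}
    (hi : y i = 0) :
    y ∈ steinitzPolytope v (A.erase i) s := by
  refine ⟨hy.1, fun j hj => ?_, hy.2.2⟩
  rcases eq_or_ne j i with rfl | hji
  · exact hi
  · exact hy.2.1 j fun hjA => hj (Finset.mem_erase.2 ⟨hji, hjA⟩)

theorem exists_affine_relation_of_finrank_succ_lt_card [FiniteDimensional ℝ E] (v : ι → E)
    {F : Finset ι} (hF : finrank ℝ E + 1 < #F) :
    ∃ w : ι → ℝ, (∀ i ∉ F, w i = 0) ∧ ∑ i, w i = 0 ∧ ∑ i, w i • v i = 0 ∧ w ≠ 0 := by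
  classical
  have hdep : ¬LinearIndepOn ℝ (fun i => (v i, (1 : ℝ))) (F : Set ι) := fun h => by
    have := h.fintype_card_le_finrank
    simp only [Finset.coe_sort_coe, Fintype.card_coe, finrank_prod, finrank_self] at this
    omega
  obtain ⟨f, hf, i, hiF, hfi⟩ := not_linearIndepOn_finset_iff.1 hdep
  refine ⟨fun i => if i ∈ F then f i else 0, fun i hi => if_neg hi, ?_, ?_,
    fun h => hfi (by simpa [hiF] using congrFun h i)⟩
  · simpa [Finset.sum_ite_mem, Prod.snd_sum] using congrArg Prod.snd hf
  · simpa [ite_smul, Finset.sum_ite_mem, Prod.fst_sum] using congrArg Prod.fst hf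

theorem card_fractionalIndices_le_of_mem_extremePoints [FiniteDimensional ℝ E]
    (hy : y ∈ (steinitzPolytope v A s).extremePoints ℝ) :
    #(fractionalIndices y) ≤ finrank ℝ E + 1 := by
  obtain ⟨hyP, hext⟩ := mem_extremePoints.1 hy
  by_contra! hcard
  obtain ⟨w, hwF, hw_sum, hw_v, hw⟩ := exists_affine_relation_of_finrank_succ_lt_card v hcard
  have hwA : ∀ i ∉ A, w i = 0 := fun i hi =>
    hwF i fun hiF => hi (fractionalIndices_subset hyP.2.1 hiF)
  have hnear : ∀ᶠ t in 𝓝 (0 : ℝ), ∀ i, y i + t * w i ∈ Set.Icc 0 1 := by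
    refine Filter.eventually_all.2 fun i => ?_
    by_cases hiF : i ∈ fractionalIndices y
    · have hcont : Continuous fun t : ℝ => y i + t * w i := by fun_prop
      have hIoo : Set.Ioo (0 : ℝ) 1 ∈ 𝓝 (y i + 0 * w i) := by
        simpa [fractionalIndices] using Ioo_mem_nhds (Finset.mem_filter.1 hiF).2.1
          (Finset.mem_filter.1 hiF).2.2
      exact (hcont.tendsto 0).eventually_mem hIoo |>.mono fun t ht => Set.Ioo_subset_Icc_self ht
    · exact Filter.Eventually.of_forall fun t => by simpa [hwF i hiF] using hyP.1 i
  obtain ⟨ε, hε, hball⟩ := Metric.eventually_nhds_iff.1 hnear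
  have hmem : ∀ t : ℝ, |t| < ε → y + t • w ∈ steinitzPolytope v A s := fun t ht =>
    add_smul_mem_steinitzPolytope hyP hwA hw_sum hw_v (hball (by simpa using ht))
  have hseg : y ∈ openSegment ℝ (y + (ε / 2) • w) (y + (-(ε / 2)) • w) :=
    ⟨1 / 2, 1 / 2, by norm_num, by norm_num, by norm_num, by module⟩
  have heq := (hext _ (hmem _ (by rw [abs_of_pos (by positivity)]; linarith))
    _ (hmem _ (by rw [abs_neg, abs_of_pos (by positivity)]; linarith)) hseg).1
  exact hw (by simpa [hε.ne'] using heq)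

theorem exists_mem_steinitzPolytope_card_fractionalIndices_le [FiniteDimensional ℝ E]
    (hy : y ∈ steinitzPolytope v A s) :
    ∃ y' ∈ steinitzPolytope v A s, #(fractionalIndices y') ≤ finrank ℝ E + 1 :=
  let ⟨y', hy'⟩ := isCompact_steinitzPolytope.extremePoints_nonempty ⟨y, hy⟩
  ⟨y', (mem_extremePoints.1 hy').1, card_fractionalIndices_le_of_mem_extremePoints hy'⟩

theorem exists_eq_zero_of_card_fractionalIndices_le {d : ℕ}
    (hy : y ∈ steinitzPolytope v A (#A - (d + 1))) (hF : #(fractionalIndices y) ≤ d + 1) :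
    ∃ i ∈ A, y i = 0 := by
  obtain ⟨hy01, hyA, hy_sum, -⟩ := hy
  by_contra! hpos
  have hsum : ∑ i ∈ A, (1 - y i) = d + 1 := by
    rw [Finset.sum_sub_distrib, Finset.sum_subset A.subset_univ fun i _ hi => hyA i hi, hy_sum]
    simp
  -- every coordinate in `A` is positive, so those that are not fractional equal `1`
  have hsumF : ∑ i ∈ A, (1 - y i) = ∑ i ∈ fractionalIndices y, (1 - y i) := by
    refine (Finset.sum_subset (fractionalIndices_subset hyA) fun i hiA hiF => ?_).symm
    have : y i = 1 := by
      by_contra hne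
      exact hiF (by simp [fractionalIndices, lt_of_le_of_ne (hy01 i).1 (hpos i hiA).symm,
        lt_of_le_of_ne (hy01 i).2 hne])
    simp [this]
  rw [hsumF] at hsum
  rcases (fractionalIndices y).eq_empty_or_nonempty with hempty | hne
  · rw [hempty, Finset.sum_empty] at hsum
    linarith [d.cast_nonneg (α := ℝ)]
  · have hlt : ∑ i ∈ fractionalIndices y, (1 - y i) < #(fractionalIndices y) := by
      simpa using Finset.sum_lt_sum_of_nonempty hne fun i hi => show 1 - y i < 1 by
        simp only [fractionalIndices, Finset.mem_filter] at hi
        linarith [hi.2.1]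
    linarith [(Nat.cast_le (α := ℝ)).2 hF, (Nat.cast_succ (R := ℝ) d)]

theorem exists_erase_mem_steinitzPolytope [DecidableEq ι] [FiniteDimensional ℝ E]
    (hA : A.Nonempty) (hy : y ∈ steinitzPolytope v A (#A - finrank ℝ E : ℕ)) :
    ∃ i ∈ A, ∃ y', y' ∈ steinitzPolytope v (A.erase i) (#(A.erase i) - finrank ℝ E : ℕ) := by
  set d := finrank ℝ E
  obtain ⟨j, hj⟩ := hA
  by_cases hAd : #A ≤ d
  · refine ⟨j, hj, 0, ?_⟩
    have : #(A.erase j) - d = 0 := by have := Finset.card_erase_le (s := A) (a := j); omega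
    simp [steinitzPolytope, this]
  replace hAd := not_le.1 hAd
  have hcast : ((#A - d : ℕ) : ℝ) = #A - d := Nat.cast_sub hAd.le
  have hAd' : (d : ℝ) + 1 ≤ #A := by exact_mod_cast hAd
  obtain ⟨y', hy', hF⟩ := exists_mem_steinitzPolytope_card_fractionalIndices_le
    (div_smul_mem_steinitzPolytope hy (s' := #A - (d + 1)) (by linarith) (by rw [hcast]; linarith))
  obtain ⟨i, hi, hy'i⟩ := exists_eq_zero_of_card_fractionalIndices_le hy' hF
  refine ⟨i, hi, y', ?_⟩
  convert mem_steinitzPolytope_erase hy' hy'i using 2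
  rw [Finset.card_erase_of_mem hi, Nat.sub_right_comm, Nat.cast_sub (by omega),
    Nat.cast_sub hAd.le]
  push_cast
  ring

theorem seminorm_sum_le_of_mem_steinitzPolytope (p : Seminorm ℝ E) {C : ℝ}
    (hv : ∀ i, p (v i) ≤ C) (hy : y ∈ steinitzPolytope v A s) :
    p (∑ i ∈ A, v i) ≤ (#A - s) * C := by
  obtain ⟨hy01, hyA, hy_sum, hy_v⟩ := hy
  have hyA_v : ∑ i ∈ A, y i • v i = 0 := by
    rwa [Finset.sum_subset A.subset_univ fun i _ hi => by rw [hyA i hi, zero_smul]]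
  have hyA_sum : ∑ i ∈ A, y i = s := by
    rwa [Finset.sum_subset A.subset_univ fun i _ hi => hyA i hi]
  have h1y : ∀ i, 0 ≤ 1 - y i := fun i => sub_nonneg.2 (hy01 i).2
  calc p (∑ i ∈ A, v i) = p (∑ i ∈ A, (1 - y i) • v i) := by
        simp [sub_smul, Finset.sum_sub_distrib, hyA_v]
    _ ≤ ∑ i ∈ A, p ((1 - y i) • v i) :=
        Finset.le_sum_of_subadditive p (map_zero p).le (map_add_le_add p) _ _
    _ = ∑ i ∈ A, (1 - y i) * p (v i) := by simp [map_smul_eq_mul, abs_of_nonneg (h1y _)]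
    _ ≤ ∑ i ∈ A, (1 - y i) * C :=
        Finset.sum_le_sum fun i _ => mul_le_mul_of_nonneg_left (hv i) (h1y i)
    _ = (#A - s) * C := by simp [← Finset.sum_mul, Finset.sum_sub_distrib, hyA_sum]

end SteinitzPolytope

theorem exists_perm_seminorm_sum_filter_lt_le {E : Type*} [AddCommGroup E] [Module ℝ E]
    [FiniteDimensional ℝ E] {m : ℕ} (p : Seminorm ℝ E) {C : ℝ} (hC : 0 ≤ C) (v : Fin m → E)
    (hv : ∀ i, p (v i) ≤ C) (hsum : ∑ i, v i = 0) :
    ∃ π : Equiv.Perm (Fin m), ∀ k,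
      p (∑ i ∈ univ.filter (fun i : Fin m => (i : ℕ) < k), v (π i)) ≤ finrank ℝ E * C := by
  set d := finrank ℝ E
  obtain ⟨π, hπ⟩ := Equiv.Perm.exists_forall_map_filter_lt
    (P := fun A => ∃ y, y ∈ steinitzPolytope v A (#A - d : ℕ))
    (fun A hA ⟨_, hy⟩ => exists_erase_mem_steinitzPolytope hA hy)
    ⟨_, div_smul_mem_steinitzPolytope (one_mem_steinitzPolytope_univ hsum) (by positivity)
      (by simp)⟩
  refine ⟨π, fun k => ?_⟩
  obtain ⟨y, hy⟩ := hπ k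
  have hA := seminorm_sum_le_of_mem_steinitzPolytope p hv hy
  rw [Finset.sum_map] at hA
  refine hA.trans (mul_le_mul_of_nonneg_right ?_ hC)
  rw [sub_le_iff_le_add]
  exact_mod_cast le_add_tsub

theorem stmt3 (d m n : ℕ) (N : (Fin d → ℝ) → ℝ)
    (hN_add : ∀ x y, N (x + y) ≤ N x + N y)
    (hN_smul : ∀ (c : ℝ) x, N (c • x) = |c| * N x)
    (u : Fin m → Fin n → Fin d → ℝ)
    (hu_norm : ∀ i j, N (u i j) ≤ 1)
    (hzero : ∑ i, ∑ j, u i j = 0) :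
    ∃ π : Fin n → Equiv.Perm (Fin m), ∀ k : ℕ, 1 ≤ k → k ≤ m →
      N (∑ i ∈ Finset.univ.filter (fun i : Fin m => (i:ℕ) < k),
          ∑ j, u (π j i) j) ≤ (n:ℝ) * d := by
  let p : Seminorm ℝ (Fin d → ℝ) := Seminorm.of N hN_add fun c x => by
    rw [hN_smul, Real.norm_eq_abs]
  have hv : ∀ i, p (∑ j, u i j) ≤ n := fun i => by
    simpa using (Finset.le_sum_of_subadditive p (map_zero p).le (map_add_le_add p) univ (u i)).trans
      (Finset.sum_le_sum fun j _ => hu_norm i j)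
  obtain ⟨π, hπ⟩ := exists_perm_seminorm_sum_filter_lt_le p n.cast_nonneg _ hv hzero
  refine ⟨fun _ => π, fun k _ _ => ?_⟩
  exact (hπ k).trans_eq (by rw [Module.finrank_fin_fun, mul_comm])
end

section
/- Let ‖·‖ be a norm on ℝ^d with unit ball U and let (u^i_1)_{i=1}^m, ..., (u^i_n)_{i=1}^m be n sequences in U whose union is a zero-sum sequence. Then for each k ∈ {1,...,m} there exist subsets I_1,...,I_n ⊆ {1,...,m}, each of cardinality k, such that ‖∑_{j=1}^n ∑_{i ∈ I_j} u^i_j‖ ≤ d. -/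
/-!
The fractional selections `x ∈ [0,1]^(m × n)` with every column sum equal to `k` and
`∑ x i j • u i j = 0` form a compact set containing the constant `k / m`; take an extreme point
`y` of it (Krein–Milman). Extremality means no nonzero direction supported on the fractional
entries of `y` preserves the `n + d` linear constraints, so `y` has at most
`(number of columns meeting a fractional entry) + d` fractional entries. A column whose sum is an
integer never holds exactly one fractional entry, hence `y` has at most `2 d` of them.
Rounding each column to a `k`-set, made of its entries equal to `1` and of the fractional entries
with the largest average, moves it by at most half its number of fractional entries in `ℓ¹`.
The selection therefore differs from `∑ y i j • u i j = 0` by `∑ c i j • u i j` with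
`∑ |c i j| ≤ d`.
-/

open Finset Filter Topology

theorem Finset.exists_subset_card_eq_nsmul_sum_le {α M : Type*} [DecidableEq α]
    [AddCommMonoid M] [LinearOrder M] [IsOrderedAddMonoid M] (S : Finset α) (x : α → M)
    {t : ℕ} (ht : t ≤ #S) :
    ∃ U ⊆ S, #U = t ∧ t • ∑ a ∈ S, x a ≤ #S • ∑ a ∈ U, x a := by
  induction S using Finset.induction_on_min_value x generalizing t with
  | empty => exact ⟨∅, subset_refl _, by simp_all, by simp⟩
  | insert a S ha hmin ih =>
    rw [card_insert_of_notMem ha] at ht ⊢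
    rcases ht.lt_or_eq with ht | rfl
    · obtain ⟨U, hUS, hU, hsum⟩ := ih (Nat.lt_succ_iff.mp ht)
      have hxa : t • x a ≤ ∑ b ∈ U, x b :=
        hU ▸ card_nsmul_le_sum U x (x a) fun b hb => hmin b (hUS hb)
      refine ⟨U, hUS.trans (subset_insert a S), hU, ?_⟩
      rw [sum_insert ha, nsmul_add, add_comm, succ_nsmul]
      exact add_le_add hsum hxa
    · exact ⟨insert a S, subset_refl _, card_insert_of_notMem ha, le_rfl⟩

variable {ι : Type*} [Fintype ι]

noncomputable def fractionalCoords (y : ι → ℝ) : Finset ι := {i | y i ∈ Set.Ioo 0 1}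

@[simp] theorem mem_fractionalCoords {y : ι → ℝ} {i : ι} :
    i ∈ fractionalCoords y ↔ y i ∈ Set.Ioo 0 1 := by
  simp [fractionalCoords]

section Column

variable {α : Type*} [Fintype α] {w : α → ℝ}

theorem sum_eq_card_add_sum_fractionalCoords (hw : ∀ a, w a ∈ Set.Icc 0 1) :
    ∑ a, w a = #{a | w a = 1} + ∑ a ∈ fractionalCoords w, w a := by
  have hsplit :
      ∀ a, w a = (if w a = 1 then 1 else 0) + if w a ∈ Set.Ioo 0 1 then w a else 0 := by
    intro a
    obtain ⟨h0, h1⟩ := hw a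
    split_ifs <;> grind
  rw [sum_congr rfl fun a _ => hsplit a, sum_add_distrib, sum_boole, ← sum_filter]
  rfl

theorem card_fractionalCoords_ne_one {k : ℕ} (hw : ∀ a, w a ∈ Set.Icc 0 1)
    (hsum : ∑ a, w a = k) :
    #(fractionalCoords w) ≠ 1 := by
  intro h
  obtain ⟨a, ha⟩ := card_eq_one.mp h
  have hwa : w a ∈ Set.Ioo 0 1 := mem_fractionalCoords.mp (ha ▸ mem_singleton_self a)
  rw [sum_eq_card_add_sum_fractionalCoords hw, ha, sum_singleton] at hsum
  have hint : w a = ((k - #{a | w a = 1} : ℤ) : ℝ) := by push_cast; linarith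
  rw [hint] at hwa
  obtain ⟨h0, h1⟩ := hwa
  norm_cast at h0 h1
  omega

theorem sum_abs_ite_sub [DecidableEq α] (hw : ∀ a, w a ∈ Set.Icc 0 1) (I : Finset α) :
    ∑ a, |(if a ∈ I then 1 else 0) - w a| = #I + ∑ a, w a - 2 * ∑ a ∈ I, w a := by
  have hterm : ∀ a, |(if a ∈ I then 1 else 0) - w a|
      = (if a ∈ I then 1 else 0) + w a - 2 * if a ∈ I then w a else 0 := by
    intro a
    obtain ⟨h0, h1⟩ := hw a
    split_ifs
    · rw [abs_of_nonneg (by linarith)]; ring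
    · rw [abs_of_nonpos (by linarith)]; ring
  rw [sum_congr rfl fun a _ => hterm a, sum_sub_distrib, sum_add_distrib, sum_boole, ← mul_sum,
    sum_ite_mem, univ_inter, filter_mem_eq_inter, univ_inter]

theorem exists_card_eq_sum_abs_ite_sub_le [DecidableEq α] {k : ℕ}
    (hw : ∀ a, w a ∈ Set.Icc 0 1) (hsum : ∑ a, w a = k) :
    ∃ I : Finset α, #I = k ∧
      ∑ a, |(if a ∈ I then 1 else 0) - w a| ≤ #(fractionalCoords w) / 2 := by
  set O : Finset α := {a | w a = 1}
  set S := fractionalCoords w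
  have hsplit := sum_eq_card_add_sum_fractionalCoords hw
  have hS_nonneg : 0 ≤ ∑ a ∈ S, w a :=
    sum_nonneg fun a ha => (mem_fractionalCoords.mp ha).1.le
  have hS_le : ∑ a ∈ S, w a ≤ #S := by
    simpa using sum_le_sum fun a ha => (mem_fractionalCoords.mp ha).2.le
  have hOk : #O ≤ k := by exact_mod_cast (show (#O : ℝ) ≤ k by linarith)
  set s := k - #O
  have hk : (k : ℝ) = #O + s := by simp only [s]; push_cast [hOk]; ring
  have hs : (s : ℝ) = ∑ a ∈ S, w a := by linarith
  obtain ⟨U, hUS, hU, hUsum⟩ :=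
    exists_subset_card_eq_nsmul_sum_le S w (t := s) (by exact_mod_cast hs ▸ hS_le)
  simp only [nsmul_eq_mul] at hUsum
  have hdisj : Disjoint O U := disjoint_left.mpr fun a haO haU => by
    have := mem_fractionalCoords.mp (hUS haU); simp_all [O]
  refine ⟨O ∪ U, by rw [card_union_of_disjoint hdisj]; omega, ?_⟩
  rw [sum_abs_ite_sub hw, card_union_of_disjoint hdisj, sum_union hdisj, hsum, hU]
  have hO : ∑ a ∈ O, w a = #O := by
    rw [sum_congr rfl fun a ha => (mem_filter.mp ha).2, sum_const, nsmul_one]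
  rw [hO]
  push_cast
  have hU_nonneg : 0 ≤ ∑ a ∈ U, w a :=
    sum_nonneg fun a ha => (mem_fractionalCoords.mp (hUS ha)).1.le
  rcases (#S).eq_zero_or_pos with hS0 | hSpos
  · rw [hS0, Nat.cast_zero] at hS_le ⊢
    linarith
  · have : (0 : ℝ) < #S := by exact_mod_cast hSpos
    nlinarith [sq_nonneg ((#S : ℝ) - 2 * s)]

end Column

section CubeSlice

variable {W : Type*} [AddCommGroup W] [Module ℝ W] (L : (ι → ℝ) →ₗ[ℝ] W)

def cubeSlice (x : ι → ℝ) : Set (ι → ℝ) :=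
  {y | (∀ i, y i ∈ Set.Icc 0 1) ∧ L y = L x}

theorem isCompact_cubeSlice (x : ι → ℝ) : IsCompact (cubeSlice L x) := by
  have hslice :
      cubeSlice L x = Set.univ.pi (fun _ => Set.Icc 0 1) ∩ (· - x) ⁻¹' LinearMap.ker L := by
    ext y
    simp only [cubeSlice, Set.mem_ofPred_eq, Set.mem_inter_iff, Set.mem_univ_pi, Set.mem_preimage,
      SetLike.mem_coe, LinearMap.mem_ker, map_sub, sub_eq_zero]
  rw [hslice]
  exact (isCompact_univ_pi fun _ => isCompact_Icc).inter_right
    ((LinearMap.ker L).closed_of_finiteDimensional.preimage (continuous_sub_right x))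

theorem exists_mem_extremePoints_cubeSlice {x : ι → ℝ} (hx : ∀ i, x i ∈ Set.Icc 0 1) :
    ∃ y, y ∈ (cubeSlice L x).extremePoints ℝ :=
  (isCompact_cubeSlice L x).extremePoints_nonempty ⟨x, hx, rfl⟩

variable {L}

theorem eq_zero_of_mem_extremePoints_cubeSlice {x y : ι → ℝ}
    (hy : y ∈ (cubeSlice L x).extremePoints ℝ) {δ : ι → ℝ}
    (hδ : ∀ i, y i ∉ Set.Ioo 0 1 → δ i = 0) (hLδ : L δ = 0) : δ = 0 := by
  obtain ⟨hy_cube, hLy⟩ := hy.1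
  have hcube : ∀ i, ∀ᶠ t in 𝓝 (0 : ℝ), y i + t * δ i ∈ Set.Icc 0 1 := by
    intro i
    by_cases hi : y i ∈ Set.Ioo 0 1
    · have hlim : Tendsto (fun t => y i + t * δ i) (𝓝 0) (𝓝 (y i)) := by
        simpa using ((continuous_id.mul continuous_const).const_add (y i)).tendsto (0 : ℝ)
      exact (hlim.eventually (isOpen_Ioo.mem_nhds hi)).mono fun _ => Set.mem_Icc_of_Ioo
    · simp [hδ i hi, hy_cube i]
  have hnear : ∀ᶠ t in 𝓝 (0 : ℝ), y + t • δ ∈ cubeSlice L x := by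
    filter_upwards [eventually_all.mpr hcube] with t ht
    exact ⟨ht, by simp [hLδ, hLy]⟩
  have hboth : ∀ᶠ t in 𝓝[≠] (0 : ℝ),
      t ≠ 0 ∧ y + t • δ ∈ cubeSlice L x ∧ y + (-t) • δ ∈ cubeSlice L x :=
    eventually_mem_nhdsWithin.and <| nhdsWithin_le_nhds <|
      hnear.and ((continuous_neg.tendsto' 0 0 neg_zero).eventually hnear)
  obtain ⟨t, ht, hplus, hminus⟩ := hboth.exists
  have hseg : y ∈ openSegment ℝ (y + t • δ) (y + (-t) • δ) :=
    ⟨1 / 2, 1 / 2, by norm_num, by norm_num, by norm_num, by module⟩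
  have hfix : y + t • δ = y := ((mem_extremePoints.mp hy).2 _ hplus _ hminus hseg).1
  exact (smul_eq_zero.mp (add_eq_left.mp hfix)).resolve_left ht

end CubeSlice

section Columns

variable {α β E : Type*} [Fintype α] [Fintype β] [AddCommGroup E] [Module ℝ E]

def colSumsAndMoment (u : α × β → E) : (α × β → ℝ) →ₗ[ℝ] (β → ℝ) × E :=
  (LinearMap.pi fun b => ∑ a, LinearMap.proj (a, b)).prod (Fintype.linearCombination ℝ u)

@[simp] theorem colSumsAndMoment_apply (u : α × β → E) (x : α × β → ℝ) :
    colSumsAndMoment u x = (fun b => ∑ a, x (a, b), ∑ p, x p • u p) := by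
  simp [colSumsAndMoment, Fintype.linearCombination_apply, funext_iff]

theorem card_fractionalCoords_le_card_image_snd_add_finrank [DecidableEq β]
    [FiniteDimensional ℝ E]
    {u : α × β → E} {x y : α × β → ℝ}
    (hy : y ∈ (cubeSlice (colSumsAndMoment u) x).extremePoints ℝ) :
    #(fractionalCoords y) ≤ #((fractionalCoords y).image Prod.snd) + Module.finrank ℝ E := by
  set F := fractionalCoords y
  set C := F.image Prod.snd
  let M : (F → ℝ) →ₗ[ℝ] (C → ℝ) × E :=
    ((LinearMap.funLeft ℝ ℝ (Subtype.val : C → β)).prodMap LinearMap.id) ∘ₗ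
      colSumsAndMoment u ∘ₗ Function.ExtendByZero.linearMap ℝ (Subtype.val : F → α × β)
  have hM : Function.Injective M := by
    rw [← LinearMap.ker_eq_bot, LinearMap.ker_eq_bot']
    intro δ hδ
    set δ' := Function.extend (Subtype.val : F → α × β) δ 0
    simp only [M, LinearMap.comp_apply, Function.ExtendByZero.linearMap_apply,
      colSumsAndMoment_apply, LinearMap.prodMap_apply, LinearMap.id_apply, Prod.ext_iff,
      Prod.fst_zero, Prod.snd_zero, funext_iff, LinearMap.funLeft_apply, Pi.zero_apply] at hδ
    have hsupp : ∀ p, p ∉ F → δ' p = 0 := fun p hp =>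
      Function.extend_apply' _ _ _ fun ⟨q, hq⟩ => hp (hq ▸ q.2)
    have hδ'0 : δ' = 0 := by
      refine eq_zero_of_mem_extremePoints_cubeSlice hy
        (fun p hp => hsupp p (by simpa [F] using hp)) ?_
      rw [colSumsAndMoment_apply]
      refine Prod.ext (funext fun b => ?_) hδ.2
      by_cases hb : b ∈ C
      · exact hδ.1 ⟨b, hb⟩
      · exact sum_eq_zero fun a _ => hsupp _ fun h => hb (mem_image_of_mem _ h)
    funext p
    simpa [δ', Subtype.val_injective.extend_apply] using congrFun hδ'0 p
  simpa [Module.finrank_prod] using LinearMap.finrank_le_finrank_of_injective hM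

theorem card_filter_snd_fractionalCoords [DecidableEq β] (y : α × β → ℝ) (b : β) :
    #{p ∈ fractionalCoords y | p.2 = b} = #(fractionalCoords fun a => y (a, b)) := by
  have hfiber : {p ∈ fractionalCoords y | p.2 = b} =
      (fractionalCoords fun a => y (a, b)).map (.sectL α b) := by
    ext ⟨a, b'⟩
    simp only [mem_filter, mem_fractionalCoords, Finset.mem_map, Function.Embedding.sectL_apply,
      Prod.mk.injEq]
    aesop
  rw [hfiber, card_map]

theorem card_fractionalCoords_eq_sum [DecidableEq β] (y : α × β → ℝ) :
    #(fractionalCoords y) = ∑ b, #(fractionalCoords fun a => y (a, b)) := by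
  rw [card_eq_sum_card_fiberwise (f := Prod.snd) (t := univ) fun _ _ => mem_coe.mpr (mem_univ _)]
  exact sum_congr rfl fun b _ => card_filter_snd_fractionalCoords y b

theorem two_mul_card_image_snd_le [DecidableEq β] {k : ℕ} {y : α × β → ℝ}
    (hy : ∀ p, y p ∈ Set.Icc 0 1) (hcol : ∀ b, ∑ a, y (a, b) = k) :
    2 * #((fractionalCoords y).image Prod.snd) ≤ #(fractionalCoords y) := by
  rw [card_eq_sum_card_image Prod.snd, mul_comm, ← smul_eq_mul]
  refine card_nsmul_le_sum _ _ _ fun b hb => ?_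
  obtain ⟨p, hp, rfl⟩ := mem_image.mp hb
  have hpos : 0 < #{q ∈ fractionalCoords y | q.2 = p.2} :=
    card_pos.mpr ⟨p, mem_filter.mpr ⟨hp, rfl⟩⟩
  have hne := card_fractionalCoords_ne_one (fun a => hy (a, p.2)) (hcol p.2)
  rw [card_filter_snd_fractionalCoords] at hpos ⊢
  omega

theorem exists_columnwise_rounding [DecidableEq α] [DecidableEq β] [FiniteDimensional ℝ E]
    (u : α × β → E) {k : ℕ} {x : α × β → ℝ} (hx : ∀ p, x p ∈ Set.Icc 0 1)
    (hcol : ∀ b, ∑ a, x (a, b) = k) :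
    ∃ I : β → Finset α, (∀ b, #(I b) = k) ∧
      ∃ c : α × β → ℝ, ∑ p, |c p| ≤ Module.finrank ℝ E ∧
        ∑ b, ∑ a ∈ I b, u (a, b) = ∑ p, x p • u p + ∑ p, c p • u p := by
  obtain ⟨y, hy⟩ := exists_mem_extremePoints_cubeSlice (colSumsAndMoment u) hx
  obtain ⟨hy_cube, hLy⟩ := hy.1
  simp only [colSumsAndMoment_apply, Prod.mk.injEq, funext_iff] at hLy
  have hycol : ∀ b, ∑ a, y (a, b) = k := fun b => (hLy.1 b).trans (hcol b)
  have hF : #(fractionalCoords y) ≤ 2 * Module.finrank ℝ E := by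
    have := card_fractionalCoords_le_card_image_snd_add_finrank hy
    have := two_mul_card_image_snd_le hy_cube hycol
    omega
  choose I hI hIy using fun b =>
    exists_card_eq_sum_abs_ite_sub_le (fun a => hy_cube (a, b)) (hycol b)
  refine ⟨I, hI, fun p => (if p.1 ∈ I p.2 then 1 else 0) - y p, ?_, ?_⟩
  · calc ∑ p, |(if p.1 ∈ I p.2 then 1 else 0) - y p|
        = ∑ b, ∑ a, |(if a ∈ I b then 1 else 0) - y (a, b)| := Fintype.sum_prod_type_right _
      _ ≤ ∑ b, (#(fractionalCoords fun a => y (a, b)) : ℝ) / 2 := sum_le_sum fun b _ => hIy b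
      _ = #(fractionalCoords y) / 2 := by
        rw [card_fractionalCoords_eq_sum, ← sum_div]; push_cast; rfl
      _ ≤ Module.finrank ℝ E := by
        rw [div_le_iff₀ two_pos]; exact_mod_cast hF.trans_eq (mul_comm _ _)
  · simp only [sub_smul, sum_sub_distrib, ite_smul, one_smul, zero_smul, ← hLy.2, add_sub_cancel]
    rw [Fintype.sum_prod_type_right]
    simp [sum_ite_mem]

end Columns

theorem stmt6 (d m n : ℕ) (N : (Fin d → ℝ) → ℝ)
    (hN_add : ∀ x y, N (x + y) ≤ N x + N y)
    (hN_smul : ∀ (c : ℝ) x, N (c • x) = |c| * N x)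
    (u : Fin m → Fin n → Fin d → ℝ)
    (hu_norm : ∀ i j, N (u i j) ≤ 1)
    (hzero : ∑ i, ∑ j, u i j = 0) :
    ∀ k : ℕ, 1 ≤ k → k ≤ m →
      ∃ I : Fin n → Finset (Fin m),
        (∀ j, (I j).card = k) ∧
        N (∑ j, ∑ i ∈ I j, u i j) ≤ (d : ℝ) := by
  intro k hk hkm
  have hm : (m : ℝ) ≠ 0 := Nat.cast_ne_zero.mpr (by omega)
  obtain ⟨I, hI, c, hc, hsum⟩ :=
    exists_columnwise_rounding (fun p : Fin m × Fin n => u p.1 p.2) (k := k) (x := fun _ => k / m)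
      (fun _ => ⟨by positivity, div_le_one_of_le₀ (by exact_mod_cast hkm) m.cast_nonneg⟩)
      (fun _ => by simp only [sum_const, card_univ, Fintype.card_fin, nsmul_eq_mul]; field_simp)
  have hmoment : ∑ p : Fin m × Fin n, (k / m : ℝ) • u p.1 p.2 = 0 := by
    rw [← smul_sum, Fintype.sum_prod_type, hzero, smul_zero]
  have hN0 : N 0 = 0 := by simpa using hN_smul 0 0
  refine ⟨I, hI, ?_⟩
  calc N (∑ j, ∑ i ∈ I j, u i j) = N (∑ p, c p • u p.1 p.2) := by
        rw [hsum, hmoment, zero_add]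
    _ ≤ ∑ p, N (c p • u p.1 p.2) := le_sum_of_subadditive N hN0.le hN_add _ _
    _ = ∑ p, |c p| * N (u p.1 p.2) := by simp only [hN_smul]
    _ ≤ ∑ p, |c p| := sum_le_sum fun p _ => mul_le_of_le_one_right (abs_nonneg _) (hu_norm _ _)
    _ ≤ d := by simpa using hc
end

section
/- Let P := {(α_1,...,α_n) : each α_j ∈ [0,1]^m with ∑_i α^i_j = k, and ∑_{i,j} α^i_j u^i_j = 0} where u^i_j ∈ ℝ^d. Then any vertex of the polytope P has at most 2d fractional (non-integer) coordinates. -/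
/-!
Let `F` be the set of fractional entries of a vertex `α` and `R` the set of rows meeting `F`.
A row with integer sum cannot contain exactly one fractional entry, so `2 |R| ≤ |F|`.
If `|F| > 2d`, then `|F| > |R| + d`, so the `nm - |F| + |R| + d` linear conditions "vanish off `F`,
zero sum on each row of `R`, `∑ v^i_j u^i_j = 0`" have a nonzero common solution `v`; it also has
zero sum on the rows outside `R`. For small `t ≠ 0` both `α ± t v` lie in `P`, contradicting
extremality.
-/

open Finset Filter Topology

variable {ι κ E : Type*} [Fintype ι] [Fintype κ] [AddCommGroup E] [Module ℝ E]

def rowSumPolytope (k : ℝ) (u : κ → ι → E) : Set (ι → κ → ℝ) :=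
  {α | (∀ j i, α j i ∈ Set.Icc (0:ℝ) 1) ∧ (∀ j, ∑ i, α j i = k) ∧ ∑ i, ∑ j, α j i • u i j = 0}

noncomputable def fractionalEntries (α : ι → κ → ℝ) : Finset (ι × κ) :=
  univ.filter fun p => α p.1 p.2 ≠ 0 ∧ α p.1 p.2 ≠ 1

lemma mem_Ioo_of_mem_fractionalEntries {α : ι → κ → ℝ} (hbox : ∀ j i, α j i ∈ Set.Icc (0:ℝ) 1)
    {j : ι} {i : κ} (h : (j, i) ∈ fractionalEntries α) : α j i ∈ Set.Ioo 0 1 := by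
  simp only [fractionalEntries, mem_filter, mem_univ, true_and] at h
  exact ⟨(hbox j i).1.lt_of_ne' h.1, (hbox j i).2.lt_of_ne h.2⟩

lemma exists_ne_fractional_of_sum_eq_int {a : κ → ℝ} {k : ℤ} (hsum : ∑ i, a i = k) {i₁ : κ}
    (h₁ : a i₁ ∈ Set.Ioo 0 1) : ∃ i₂ ≠ i₁, a i₂ ≠ 0 ∧ a i₂ ≠ 1 := by
  classical
  by_contra! h
  have hint : ∀ i ∈ univ.erase i₁, a i = ((if a i = 1 then 1 else 0 : ℤ) : ℝ) := by
    intro i hi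
    by_cases h0 : a i = 0
    · simp [h0]
    · simp [h i (ne_of_mem_erase hi) h0]
  have hi₁ : a i₁ = ((k - ∑ i ∈ univ.erase i₁, if a i = 1 then 1 else 0 : ℤ) : ℝ) := by
    rw [← add_sum_erase _ _ (mem_univ i₁), sum_congr rfl hint] at hsum
    push_cast at hsum ⊢
    linarith
  obtain ⟨hpos, hlt⟩ := h₁
  rw [hi₁] at hpos hlt
  norm_cast at hpos hlt
  omega

lemma two_mul_card_image_le_card {α β : Type*} [DecidableEq β] {f : α → β} {s : Finset α}
    (h : ∀ a ∈ s, ∃ b ∈ s, b ≠ a ∧ f b = f a) : 2 * (s.image f).card ≤ s.card := by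
  refine mul_card_image_le_card s 2 fun y hy => ?_
  obtain ⟨a, ha, rfl⟩ := mem_image.mp hy
  obtain ⟨b, hb, hba, hfb⟩ := h a ha
  exact one_lt_card.mpr ⟨b, by simp [hb, hfb], a, by simp [ha], hba⟩

lemma exists_ne_zero_rowSum_eq_zero [FiniteDimensional ℝ E] [DecidableEq ι] (u : κ → ι → E)
    (s : Finset (ι × κ)) (hs : (s.image Prod.fst).card + Module.finrank ℝ E < s.card) :
    ∃ v : ι → κ → ℝ, v ≠ 0 ∧ (∀ j i, (j, i) ∉ s → v j i = 0) ∧ (∀ j, ∑ i, v j i = 0) ∧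
      ∑ i, ∑ j, v j i • u i j = 0 := by
  classical
  let Φ : (ι → κ → ℝ) →ₗ[ℝ] ((sᶜ : Finset (ι × κ)) → ℝ) × (s.image Prod.fst → ℝ) × E :=
    { toFun v := (fun p => v p.1.1 p.1.2, fun j => ∑ i, v j i, ∑ i, ∑ j, v j i • u i j)
      map_add' v w := by ext <;> simp [add_smul, sum_add_distrib]
      map_smul' c v := by ext <;> simp [mul_smul, smul_sum, mul_sum] }
  have hdim : Module.finrank ℝ (((sᶜ : Finset (ι × κ)) → ℝ) × (s.image Prod.fst → ℝ) × E) <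
      Module.finrank ℝ (ι → κ → ℝ) := by
    have := card_le_univ s
    simp only [Module.finrank_prod, Module.finrank_fintype_fun_eq_card, Module.finrank_pi_fintype,
      Fintype.card_coe, card_compl, Fintype.card_prod, sum_const, card_univ, smul_eq_mul] at this ⊢
    omega
  obtain ⟨v, hv, hv0⟩ :=
    Submodule.exists_mem_ne_zero_of_ne_bot (LinearMap.ker_ne_bot_of_finrank_lt (f := Φ) hdim)
  obtain ⟨hout, hrow, hu⟩ : (∀ p : (sᶜ : Finset (ι × κ)), v p.1.1 p.1.2 = 0) ∧
      (∀ j : s.image Prod.fst, ∑ i, v j i = 0) ∧ ∑ i, ∑ j, v j i • u i j = 0 := by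
    simpa [Φ, funext_iff] using hv
  have hout' : ∀ j i, (j, i) ∉ s → v j i = 0 := fun j i h => hout ⟨(j, i), mem_compl.mpr h⟩
  refine ⟨v, hv0, hout', fun j => ?_, hu⟩
  by_cases hj : j ∈ s.image Prod.fst
  · exact hrow ⟨j, hj⟩
  · exact sum_eq_zero fun i _ => hout' j i fun h => hj (mem_image_of_mem Prod.fst h)

lemma eventually_forall_add_mul_mem_Icc {α v : ι → κ → ℝ}
    (hbox : ∀ j i, α j i ∈ Set.Icc (0:ℝ) 1)
    (hsupp : ∀ j i, (j, i) ∉ fractionalEntries α → v j i = 0) :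
    ∀ᶠ t in 𝓝 (0:ℝ), ∀ j i, α j i + t * v j i ∈ Set.Icc (0:ℝ) 1 := by
  simp only [eventually_all]
  intro j i
  by_cases h : (j, i) ∈ fractionalEntries α
  · have hcont : Continuous fun t : ℝ => α j i + t * v j i := by fun_prop
    have hnhds : Set.Ioo (0:ℝ) 1 ∈ 𝓝 (α j i + 0 * v j i) := by
      simpa using isOpen_Ioo.mem_nhds (mem_Ioo_of_mem_fractionalEntries hbox h)
    filter_upwards [hcont.continuousAt.eventually_mem hnhds] with t ht
    exact Set.Ioo_subset_Icc_self ht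
  · simp [hsupp j i h, hbox j i]

lemma eq_zero_of_add_mem_of_sub_mem {V : Type*} [AddCommGroup V] [Module ℝ V] {A : Set V}
    {x v : V} (hx : x ∈ A.extremePoints ℝ) (hadd : x + v ∈ A) (hsub : x - v ∈ A) : v = 0 :=
  add_eq_left.mp <| (mem_extremePoints.mp hx).2 _ hadd _ hsub (mem_openSegment_add_sub x v) |>.1

lemma add_smul_mem_rowSumPolytope {k : ℝ} {u : κ → ι → E} {α v : ι → κ → ℝ} {t : ℝ}
    (hα : α ∈ rowSumPolytope k u) (hrow : ∀ j, ∑ i, v j i = 0) (hu : ∑ i, ∑ j, v j i • u i j = 0)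
    (hbox : ∀ j i, α j i + t * v j i ∈ Set.Icc (0:ℝ) 1) :
    α + t • v ∈ rowSumPolytope k u := by
  obtain ⟨-, hαrow, hαu⟩ := hα
  refine ⟨by simpa using hbox, fun j => ?_, ?_⟩
  · simp [sum_add_distrib, ← mul_sum, hrow, hαrow]
  · simp [add_smul, sum_add_distrib, mul_smul, ← smul_sum, hαu, hu]

lemma eq_zero_of_mem_extremePoints_rowSumPolytope {k : ℝ} {u : κ → ι → E} {α v : ι → κ → ℝ}
    (hα : α ∈ (rowSumPolytope k u).extremePoints ℝ)
    (hsupp : ∀ j i, (j, i) ∉ fractionalEntries α → v j i = 0) (hrow : ∀ j, ∑ i, v j i = 0)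
    (hu : ∑ i, ∑ j, v j i • u i j = 0) : v = 0 := by
  have hαP := hα.1
  have hplus := eventually_forall_add_mul_mem_Icc hαP.1 hsupp
  have hminus := eventually_forall_add_mul_mem_Icc hαP.1 (v := -v) fun j i h => by
    simp [hsupp j i h]
  obtain ⟨t, ⟨hpt, hmt⟩, ht⟩ :=
    (((hplus.and hminus).filter_mono nhdsWithin_le_nhds).and
      (self_mem_nhdsWithin : {t : ℝ | t ≠ 0} ∈ 𝓝[≠] 0)).exists
  have hsub : α - t • v ∈ rowSumPolytope k u := by
    simpa [sub_eq_add_neg] using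
      add_smul_mem_rowSumPolytope hαP (v := -v) (by simpa using hrow) (by simpa using hu) hmt
  have htv := eq_zero_of_add_mem_of_sub_mem hα (add_smul_mem_rowSumPolytope hαP hrow hu hpt) hsub
  exact (smul_eq_zero.mp htv).resolve_left ht

theorem stmt7_general (d m n k : ℕ)
    (u : Fin m → Fin n → Fin d → ℝ)
    (P : Set (Fin n → Fin m → ℝ))
    (hP : P = {α | (∀ j i, α j i ∈ Set.Icc (0:ℝ) 1) ∧
      (∀ j, ∑ i, α j i = (k:ℝ)) ∧
      (∑ i, ∑ j, (α j i) • u i j = 0)})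
    (α : Fin n → Fin m → ℝ) (hα : α ∈ Set.extremePoints ℝ P) :
    (Finset.univ.filter
      (fun p : Fin n × Fin m => α p.1 p.2 ≠ 0 ∧ α p.1 p.2 ≠ 1)).card ≤ 2 * d := by
  subst hP
  change (fractionalEntries α).card ≤ 2 * d
  obtain ⟨hbox, hrow, -⟩ := hα.1
  have hpartner : ∀ p ∈ fractionalEntries α, ∃ q ∈ fractionalEntries α, q ≠ p ∧ q.1 = p.1 := by
    rintro ⟨j, i₁⟩ hp
    obtain ⟨i₂, hne, hi₂⟩ := exists_ne_fractional_of_sum_eq_int (k := k) (by simpa using hrow j)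
      (mem_Ioo_of_mem_fractionalEntries hbox hp)
    exact ⟨(j, i₂), by simpa [fractionalEntries] using hi₂, by simpa using hne, rfl⟩
  have hrows := two_mul_card_image_le_card hpartner
  by_contra! hlarge
  obtain ⟨v, hv0, hsupp, hvrow, hvu⟩ := exists_ne_zero_rowSum_eq_zero u (fractionalEntries α)
    (by rw [Module.finrank_fin_fun]; omega)
  exact hv0 (eq_zero_of_mem_extremePoints_rowSumPolytope hα hsupp hvrow hvu)

theorem stmt7 (d m n k : ℕ) (hk : k ≤ m)
    (u : Fin m → Fin n → Fin d → ℝ)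
    (P : Set (Fin n → Fin m → ℝ))
    (hP : P = {α | (∀ j i, α j i ∈ Set.Icc (0:ℝ) 1) ∧
      (∀ j, ∑ i, α j i = (k:ℝ)) ∧
      (∑ i, ∑ j, (α j i) • u i j = 0)})
    (α : Fin n → Fin m → ℝ) (hα : α ∈ Set.extremePoints ℝ P) :
    (Finset.univ.filter
      (fun p : Fin n × Fin m => α p.1 p.2 ≠ 0 ∧ α p.1 p.2 ≠ 1)).card ≤ 2 * d :=
  stmt7_general d m n k u P hP α hα
end

section
/- Suppose v ∈ conv{u^1,...,u^{d+1}} satisfies 0 ∈ conv{u^1,...,u^{d+1}}, i.e., there are λ_1,...,λ_{d+1} ≥ 0 with ∑ λ_i = 1 and ∑ λ_i u^i = 0. Then the centroid c := (1/(d+1))·∑_{i=1}^{d+1} u^i satisfies ‖c‖ ≤ (d/(d+1))·max_i ‖u^i‖ for any norm ‖·‖ on ℝ^d. -/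
/-!
Since the weights `l i` are nonnegative and sum to `1`, each `1 - l i` is nonnegative, and
`∑ (1 - l i) • u i = ∑ u i` because `∑ l i • u i = 0`. Hence `(d + 1) • c` is a nonnegative
combination of the `u i` with total weight `(d + 1) - 1 = d`, and the triangle inequality gives
`‖(d + 1) • c‖ ≤ d · maxᵢ ‖u i‖`.
-/

open Finset

namespace Seminorm

variable {ι E : Type*} [AddCommGroup E] [Module ℝ E] (p : Seminorm ℝ E)

theorem apply_sum_smul_le {s : Finset ι} {a : ι → ℝ} {u : ι → E} {M : ℝ}
    (ha : ∀ i ∈ s, 0 ≤ a i) (hM : ∀ i ∈ s, p (u i) ≤ M) :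
    p (∑ i ∈ s, a i • u i) ≤ (∑ i ∈ s, a i) * M := by
  calc p (∑ i ∈ s, a i • u i)
      ≤ ∑ i ∈ s, p (a i • u i) := le_sum_of_subadditive p (map_zero p).le (map_add_le_add p) _ _
    _ = ∑ i ∈ s, a i * p (u i) := by
        refine sum_congr rfl fun i hi => ?_
        rw [map_smul_eq_mul, Real.norm_of_nonneg (ha i hi)]
    _ ≤ ∑ i ∈ s, a i * M := sum_le_sum fun i hi => mul_le_mul_of_nonneg_left (hM i hi) (ha i hi)
    _ = (∑ i ∈ s, a i) * M := (sum_mul ..).symm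

theorem apply_centroid_le [Fintype ι] {u : ι → E} {l : ι → ℝ} {M : ℝ}
    (hl_nonneg : ∀ i, 0 ≤ l i) (hl_sum : ∑ i, l i = 1) (hl_comb : ∑ i, l i • u i = 0)
    (hM : ∀ i, p (u i) ≤ M) :
    p ((Fintype.card ι : ℝ)⁻¹ • ∑ i, u i) ≤ (1 - (Fintype.card ι : ℝ)⁻¹) * M := by
  have hn : (Fintype.card ι : ℝ) ≠ 0 := by
    obtain ⟨i, -, -⟩ := exists_ne_zero_of_sum_ne_zero (hl_sum ▸ one_ne_zero : ∑ i, l i ≠ 0)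
    have : Nonempty ι := ⟨i⟩
    exact Nat.cast_ne_zero.2 Fintype.card_ne_zero
  have hl_le_one : ∀ i, l i ≤ 1 := fun i =>
    hl_sum ▸ single_le_sum (fun j _ => hl_nonneg j) (mem_univ i)
  have hsum : ∑ i, u i = ∑ i, (1 - l i) • u i := by
    simp only [sub_smul, one_smul, sum_sub_distrib, hl_comb, sub_zero]
  calc p ((Fintype.card ι : ℝ)⁻¹ • ∑ i, u i)
      = (Fintype.card ι : ℝ)⁻¹ * p (∑ i, (1 - l i) • u i) := by
        rw [map_smul_eq_mul, hsum, norm_inv, Real.norm_natCast]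
    _ ≤ (Fintype.card ι : ℝ)⁻¹ * ((∑ i, (1 - l i)) * M) := by
        gcongr
        exact p.apply_sum_smul_le (fun i _ => sub_nonneg.2 (hl_le_one i)) fun i _ => hM i
    _ = (1 - (Fintype.card ι : ℝ)⁻¹) * M := by
        rw [sum_sub_distrib, hl_sum, sum_const, card_univ, nsmul_eq_mul, mul_one]
        field_simp

end Seminorm

theorem stmt8 (d : ℕ) (N : (Fin d → ℝ) → ℝ)
    (hN_add : ∀ x y, N (x + y) ≤ N x + N y)
    (hN_smul : ∀ (c : ℝ) x, N (c • x) = |c| * N x)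
    (u : Fin (d+1) → Fin d → ℝ)
    (l : Fin (d+1) → ℝ) (hl_nonneg : ∀ i, 0 ≤ l i)
    (hl_sum : ∑ i, l i = 1) (hl_comb : ∑ i, l i • u i = 0) :
    N (((d:ℝ)+1)⁻¹ • ∑ i, u i)
      ≤ ((d:ℝ) / (d+1)) * Finset.univ.sup' Finset.univ_nonempty (fun i => N (u i)) := by
  let p : Seminorm ℝ (Fin d → ℝ) := .of N hN_add fun c x => by rw [hN_smul, Real.norm_eq_abs]
  have h := p.apply_centroid_le hl_nonneg hl_sum hl_comb (M := univ.sup' univ_nonempty _)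
    fun i => le_sup' (fun i => N (u i)) (mem_univ i)
  have hcoef : 1 - ((d : ℝ) + 1)⁻¹ = d / (d + 1) := by field_simp; ring
  rwa [Fintype.card_fin, Nat.cast_succ, hcoef] at h
end

section
/- Let A ∈ ℤ^{s×t} with all absolute entries at most Δ, and let w ∈ ℝ^t with w ≥ 0 and A w = 0. If ‖w‖₁ > t·(2sΔ+1)^s, then there exists a nonzero integer vector w̄ ∈ ℤ^t with w̄ ≥ 0, A w̄ = 0, and w̄ ≤ w (componentwise). -/
/-!
The cone `{x ≥ 0 : A x = 0}` is generated by integer vectors `r` with `∑ r ≤ (s+1)! Δ^s`. For a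
cone point `x` whose support is minimal, the columns of `A` on that support, together with a row of
ones, are linearly independent (otherwise one can move along a kernel direction of coordinate sum
zero until a coordinate vanishes). Cramer's rule on a nonsingular square subsystem then shows that
`|det N| • x / ∑ x` is integral, with coordinate sum `|det N| ≤ (s+1)! Δ^s` by expanding along the
row of ones.

Given `w`, take such an `r` with support inside that of `w` and the largest `θ` with `θ r ≤ w`. If
`θ ≥ 1` then `r ≤ w`; otherwise `w - θ r` has smaller support and `‖w‖₁` dropped by at most
`(s+1)! Δ^s`. So either some `r ≤ w` appears, or `‖w‖₁ ≤ t (s+1)! Δ^s ≤ t (2sΔ+1)^s`.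
-/

open Matrix Function Finset
open scoped Nat

theorem support_ssubset_induction {ι R : Type*} [Finite ι] [Zero R] {P : (ι → R) → Prop}
    (h : ∀ x, (∀ y, support y ⊂ support x → P y) → P x) (x : ι → R) : P x :=
  (InvImage.wf support wellFounded_lt).induction x h

theorem exists_pos_sub_smul_nonneg_support_ssubset {ι K : Type*} [Fintype ι] [Field K]
    [LinearOrder K] [IsStrictOrderedRing K] {x z : ι → K}
    (hx : 0 ≤ x) (hzx : support z ⊆ support x) (hz : ∃ j, 0 < z j) :
    ∃ θ : K, 0 < θ ∧ 0 ≤ x - θ • z ∧ support (x - θ • z) ⊂ support x := by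
  classical
  obtain ⟨j₁, hj₁⟩ := hz
  obtain ⟨j₀, hj₀, hmin⟩ := (univ.filter fun j => 0 < z j).exists_min_image
    (fun j => x j / z j) ⟨j₁, by simpa using hj₁⟩
  have hzj₀ : 0 < z j₀ := (mem_filter.1 hj₀).2
  have hxj₀ : 0 < x j₀ := (hx j₀).lt_of_ne' (hzx hzj₀.ne')
  have hθ : 0 < x j₀ / z j₀ := div_pos hxj₀ hzj₀
  refine ⟨x j₀ / z j₀, hθ, fun j => ?_, ?_⟩
  · rcases lt_or_ge 0 (z j) with hzj | hzj
    · have := hmin j (by simp [hzj])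
      rw [le_div_iff₀ hzj] at this
      simpa using this
    · simpa using (mul_nonpos_of_nonneg_of_nonpos hθ.le hzj).trans (hx j)
  · refine (Set.ssubset_iff_of_subset ((support_sub _ _).trans
      (Set.union_subset le_rfl ((support_smul_subset_right _ _).trans hzx)))).2
      ⟨j₀, hxj₀.ne', by simp [div_mul_cancel₀ _ hzj₀.ne']⟩

theorem factorial_succ_mul_pow_le (s : ℕ) {Δ : ℤ} (hΔ : 0 ≤ Δ) :
    ((s + 1)! : ℤ) * Δ ^ s ≤ (2 * s * Δ + 1) ^ s := by
  rcases s.eq_zero_or_pos with rfl | hs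
  · simp
  have hfac : (s + 1)! ≤ (s + 1) ^ s := by
    have := Nat.factorial_mul_descFactorial s.le_succ
    rw [show s + 1 - s = 1 by omega, Nat.factorial_one, one_mul] at this
    exact this ▸ (s + 1).descFactorial_le_pow s
  have hs' : (1 : ℤ) ≤ s := by exact_mod_cast hs
  calc ((s + 1)! : ℤ) * Δ ^ s ≤ ((s + 1 : ℕ) : ℤ) ^ s * Δ ^ s := by gcongr; exact_mod_cast hfac
    _ = ((s + 1) * Δ) ^ s := by push_cast; rw [mul_pow]
    _ ≤ (2 * s * Δ + 1) ^ s := by gcongr; nlinarith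

namespace Matrix

theorem exists_det_submatrix_ne_zero {K m n : Type*} [Field K] [Fintype m] [Fintype n]
    [DecidableEq n] {M : Matrix m n K} (hM : Injective M.mulVec) :
    ∃ e : n → m, (M.submatrix e id).det ≠ 0 := by
  -- a maximal linearly independent family of rows has `rank M = card n` members
  obtain ⟨κ, a, ha, hspan, hli⟩ := exists_linearIndependent' K M.row
  have : Finite κ := Finite.of_injective a ha
  have := Fintype.ofFinite κ
  have hcard : Fintype.card n = Fintype.card κ := by
    rw [linearIndependent_iff_card_eq_finrank_span.1 hli, Set.finrank, hspan,
      ← rank_eq_finrank_span_row, rank, LinearMap.finrank_range_of_inj hM,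
      Module.finrank_fintype_fun_eq_card]
  let e := Fintype.equivOfCardEq hcard
  refine ⟨a ∘ e, ((isUnit_iff_isUnit_det _).1 (linearIndependent_rows_iff_isUnit.1 ?_)).ne_zero⟩
  exact hli.comp e e.injective

theorem abs_det_le_of_row_eq_one {n : Type*} [Fintype n] [DecidableEq n] {Δ : ℤ}
    (N : Matrix n n ℤ) (i₀ : n) (h1 : ∀ j, N i₀ j = 1) (hN : ∀ i j, |N i j| ≤ Δ) :
    |N.det| ≤ (Fintype.card n)! * Δ ^ (Fintype.card n - 1) := by
  have : Nonempty n := ⟨i₀⟩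
  obtain ⟨m, hm⟩ := Nat.exists_eq_succ_of_ne_zero (Fintype.card_ne_zero (α := n))
  let e := Fintype.equivFinOfCardEq hm
  rw [← det_reindex_self e, hm, det_succ_row _ (e i₀)]
  calc _ ≤ ∑ j, |((reindex e e N).submatrix (e i₀).succAbove j.succAbove).det| :=
        (abs_sum_le_sum_abs _ _).trans_eq (by simp [h1, abs_mul])
    _ ≤ ∑ _j : Fin (m + 1), (m ! * Δ ^ m : ℤ) := sum_le_sum fun j _ => by
        simpa using det_le (abv := AbsoluteValue.abs) (x := Δ)
          (A := (reindex e e N).submatrix (e i₀).succAbove j.succAbove) fun a b => hN _ _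
    _ = _ := by simp [Nat.factorial_succ]; ring

theorem submatrix_val_mulVec_comp_val {m ι R : Type*} [Fintype ι]
    [NonUnitalNonAssocSemiring R] (M : Matrix m ι R) {S : Set ι} [Fintype S] {x : ι → R}
    (hx : support x ⊆ S) : M.submatrix id (Subtype.val : S → ι) *ᵥ (x ∘ Subtype.val) = M *ᵥ x := by
  ext i
  change ∑ j : S, M i j * x j = ∑ j, M i j * x j
  rw [Finset.sum_set_coe (f := fun j => M i j * x j)]
  refine Finset.sum_subset (subset_univ _) fun j _ hj => ?_
  rw [Set.mem_toFinset] at hj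
  simp [notMem_support.1 fun h => hj (hx h)]

theorem map_intCast_mulVec {m n R : Type*} [Fintype n] [Ring R] (M : Matrix m n ℤ) (v : n → ℤ) :
    M.map (Int.cast : ℤ → R) *ᵥ (fun j => (v j : R)) = fun i => ((M *ᵥ v) i : R) :=
  funext fun i => ((Int.castRingHom R).map_mulVec M v i).symm

theorem intCast_det_smul_eq_of_mulVec_eq {n R : Type*} [Fintype n] [DecidableEq n] [CommRing R]
    {N : Matrix n n ℤ} {y : n → R} {u : n → ℤ} {c : R}
    (h : N.map (Int.cast : ℤ → R) *ᵥ y = c • fun a => (u a : R)) :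
    (N.det : R) • y = c • fun a => ((N.adjugate *ᵥ u) a : R) := by
  have key := congrArg ((N.map (Int.cast : ℤ → R)).adjugate *ᵥ ·) h
  simp only [mulVec_mulVec, adjugate_mul, mulVec_smul, smul_mulVec, one_mulVec] at key
  have hdet : (N.map (Int.cast : ℤ → R)).det = N.det := ((Int.castRingHom R).map_det N).symm
  have hadj : (N.map (Int.cast : ℤ → R)).adjugate = N.adjugate.map Int.cast :=
    ((Int.castRingHom R).map_adjugate N).symm
  rwa [hdet, hadj, map_intCast_mulVec] at key

theorem exists_intCast_eq_abs_det_div_smul {ι K : Type*} [Field K] {S : Set ι} [Fintype S]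
    [DecidableEq S] {N : Matrix S S ℤ} {x : ι → K} (hxS : support x ⊆ S) {u : S → ℤ} {c : K}
    (hc : c ≠ 0) (hN : (N.det : K) ≠ 0)
    (h : N.map (Int.cast : ℤ → K) *ᵥ (x ∘ Subtype.val) = c • fun a => (u a : K)) :
    ∃ r : ι → ℤ, (fun j => (r j : K)) = (|N.det| / c : K) • x := by
  have hcr := intCast_det_smul_eq_of_mulVec_eq h
  have hsign : (N.det.sign : K) * N.det = |N.det| := by
    rw [← Int.cast_mul, Int.sign_mul_self_eq_natAbs, Int.natCast_natAbs]
  refine ⟨extend Subtype.val (N.det.sign • (N.adjugate *ᵥ u)) 0, funext fun j => ?_⟩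
  by_cases hj : j ∈ S
  · obtain ⟨a, rfl⟩ : ∃ a : S, a.1 = j := ⟨⟨j, hj⟩, rfl⟩
    have hxa : x a = c * ((N.adjugate *ᵥ u) a : K) / N.det := by
      rw [eq_div_iff hN, mul_comm]
      simpa using congrFun hcr a
    simp only [Subtype.val_injective.extend_apply, Pi.smul_apply, smul_eq_mul, Int.cast_mul]
    rw [← hsign, hxa]
    field_simp
  · rw [extend_apply' _ _ _ fun ⟨a, ha⟩ => hj (ha ▸ a.2)]
    simp [notMem_support.1 fun h => hj (hxS h)]

def withOnesRow {σ ι R : Type*} [One R] (A : Matrix σ ι R) : Matrix (σ ⊕ Unit) ι R :=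
  fromRows A (of fun _ _ => 1)

theorem withOnesRow_mulVec {σ ι R : Type*} [Fintype ι] [NonAssocSemiring R]
    (A : Matrix σ ι R) (x : ι → R) :
    A.withOnesRow *ᵥ x = Sum.elim (A *ᵥ x) fun _ => ∑ j, x j := by
  ext (i | i) <;> simp [withOnesRow, mulVec, dotProduct]

theorem withOnesRow_map {σ ι R S : Type*} [One R] [One S] (A : Matrix σ ι R) (f : R → S)
    (hf : f 1 = 1) : A.withOnesRow.map f = (A.map f).withOnesRow := by
  ext (i | i) j <;> simp [withOnesRow, hf]

theorem abs_det_submatrix_withOnesRow_le {σ ι n : Type*} [Fintype σ] [Fintype n]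
    [DecidableEq n] {Δ : ℤ} (hΔ : 1 ≤ Δ) {A : Matrix σ ι ℤ} (hA : ∀ i j, |A i j| ≤ Δ)
    (e : n → σ ⊕ Unit) (g : n → ι) {a₀ : n} (ha₀ : e a₀ = Sum.inr ()) :
    |(A.withOnesRow.submatrix e g).det| ≤ (Fintype.card σ + 1)! * Δ ^ Fintype.card σ := by
  by_cases he : Injective e
  · have hcard : Fintype.card n ≤ Fintype.card σ + 1 := by
      simpa using Fintype.card_le_of_injective e he
    have hentry : ∀ a b, |A.withOnesRow.submatrix e g a b| ≤ Δ := fun a b => by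
      rcases h : e a with i | _ <;> simp [withOnesRow, h, hA, hΔ]
    calc _ ≤ ((Fintype.card n)! * Δ ^ (Fintype.card n - 1) : ℤ) :=
          abs_det_le_of_row_eq_one _ a₀ (fun j => by simp [withOnesRow, ha₀]) hentry
      _ ≤ _ := mul_le_mul (by exact_mod_cast Nat.factorial_le hcard)
          (pow_le_pow_right₀ hΔ (by omega)) (by positivity) (by positivity)
  · obtain ⟨a, b, hab, hne⟩ : ∃ a b, e a = e b ∧ a ≠ b := by simpa [Injective] using he
    rw [det_zero_of_row_eq hne (by ext j; simp [hab]), abs_zero]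
    positivity

end Matrix

section Cone

variable {σ ι : Type*} [Fintype ι] {A : Matrix σ ι ℤ}

open scoped Classical in
theorem exists_int_eq_smul_of_injective [Fintype σ] {Δ : ℤ} (hΔ : 1 ≤ Δ)
    (hA : ∀ i j, |A i j| ≤ Δ) {x : ι → ℝ} (hx : 0 ≤ x) (hx0 : x ≠ 0)
    (hAx : A.map (Int.cast : ℤ → ℝ) *ᵥ x = 0)
    (hinj : Injective ((A.withOnesRow.map (Int.cast : ℤ → ℝ)).submatrix id
      (Subtype.val : support x → ι)).mulVec) :
    ∃ (r : ι → ℤ) (c : ℝ), 0 < c ∧ (fun j => (r j : ℝ)) = c • x ∧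
      ∑ j, r j ≤ (Fintype.card σ + 1)! * Δ ^ Fintype.card σ := by
  obtain ⟨e, he⟩ := exists_det_submatrix_ne_zero hinj
  set N : Matrix (support x) (support x) ℤ := A.withOnesRow.submatrix e Subtype.val
  have hN : (N.det : ℝ) ≠ 0 := ((Int.castRingHom ℝ).map_det N).trans_ne he
  set c := ∑ j, x j
  have hc : 0 < c := Fintype.sum_pos (hx.lt_of_ne (Ne.symm hx0))
  set u : support x → ℤ := fun a => Sum.elim 0 1 (e a)
  have hNx : N.map Int.cast *ᵥ (x ∘ Subtype.val) = c • fun a => (u a : ℝ) := by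
    calc N.map Int.cast *ᵥ (x ∘ Subtype.val)
        = ((A.withOnesRow.map (Int.cast : ℤ → ℝ)).submatrix id Subtype.val *ᵥ
            (x ∘ Subtype.val)) ∘ e := rfl
      _ = (A.withOnesRow.map (Int.cast : ℤ → ℝ) *ᵥ x) ∘ e := by
          rw [submatrix_val_mulVec_comp_val _ subset_rfl]
      _ = c • fun a => (u a : ℝ) := by
          rw [withOnesRow_map _ _ Int.cast_one, withOnesRow_mulVec, hAx]
          funext a
          rcases h : e a with i | _ <;> simp [u, c, h]
  obtain ⟨r, hr⟩ := exists_intCast_eq_abs_det_div_smul subset_rfl hc.ne' hN hNx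
  refine ⟨r, |N.det| / c, div_pos (Int.cast_pos.2 (abs_pos.2 fun h => hN (by simp [h]))) hc,
    hr, ?_⟩
  have hsum : ∑ j, r j = |N.det| := by
    have := congrArg (∑ j, · j) hr
    simp only [Pi.smul_apply, smul_eq_mul, ← mul_sum] at this
    rw [show ∑ i, x i = c from rfl, div_mul_cancel₀ _ hc.ne'] at this
    exact_mod_cast this
  obtain ⟨a₀, ha₀⟩ : ∃ a₀, e a₀ = Sum.inr () := by
    by_contra! h
    have hu : u = 0 := funext fun a => by
      rcases h' : e a with i | _
      · simp [u, h']
      · exact absurd h' (h a)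
    obtain ⟨j, hj⟩ := Function.ne_iff.1 hx0
    have hy := eq_zero_of_mulVec_eq_zero (M := N.map (Int.cast : ℤ → ℝ)) he
      (by rw [hNx, hu]; ext; simp)
    exact hj (congrFun hy ⟨j, hj⟩)
  rw [hsum]
  exact abs_det_submatrix_withOnesRow_le hΔ hA e Subtype.val ha₀

open scoped Classical in
theorem exists_support_ssubset_of_not_injective {x : ι → ℝ} (hx : 0 ≤ x) (hx0 : x ≠ 0)
    (hAx : A.map (Int.cast : ℤ → ℝ) *ᵥ x = 0)
    (hinj : ¬Injective ((A.withOnesRow.map (Int.cast : ℤ → ℝ)).submatrix id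
      (Subtype.val : support x → ι)).mulVec) :
    ∃ y : ι → ℝ, 0 ≤ y ∧ y ≠ 0 ∧ A.map (Int.cast : ℤ → ℝ) *ᵥ y = 0 ∧ support y ⊂ support x := by
  rw [← coe_mulVecLin, injective_iff_map_eq_zero] at hinj
  push Not at hinj
  obtain ⟨z, hMz, hz0⟩ := hinj
  set z' : ι → ℝ := extend Subtype.val z 0
  have hz'S : support z' ⊆ support x := fun j hj => by
    by_contra h
    exact hj (extend_apply' _ _ _ fun ⟨a, ha⟩ => h (ha ▸ a.2))
  have hMz' : A.withOnesRow.map Int.cast *ᵥ z' = 0 := by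
    rw [← submatrix_val_mulVec_comp_val _ hz'S, extend_comp Subtype.val_injective]
    exact hMz
  rw [withOnesRow_map _ _ Int.cast_one, withOnesRow_mulVec] at hMz'
  have hAz' : A.map Int.cast *ᵥ z' = 0 := funext fun i => congrFun hMz' (Sum.inl i)
  have hsumz' : ∑ j, z' j = 0 := congrFun hMz' (Sum.inr ())
  obtain ⟨a, ha⟩ := Function.ne_iff.1 hz0
  obtain ⟨j, -, hj⟩ := exists_pos_of_sum_zero_of_exists_nonzero z' hsumz'
    ⟨a, mem_univ _, by simpa [z', Subtype.val_injective.extend_apply] using ha⟩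
  obtain ⟨θ, -, hx', hss⟩ := exists_pos_sub_smul_nonneg_support_ssubset hx hz'S ⟨j, hj⟩
  refine ⟨x - θ • z', hx', fun h => ?_, ?_, hss⟩
  · have := congrArg (∑ j, · j) h
    simp only [Pi.sub_apply, Pi.smul_apply, smul_eq_mul, sum_sub_distrib, ← mul_sum, hsumz',
      mul_zero, sub_zero, Pi.zero_apply, sum_const_zero] at this
    exact hx0 ((Fintype.sum_eq_zero_iff_of_nonneg hx).1 this)
  · rw [mulVec_sub, mulVec_smul, hAx, hAz', smul_zero, sub_zero]

theorem exists_int_ray_support_subset [Fintype σ] {Δ : ℤ} (hΔ : 1 ≤ Δ)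
    (hA : ∀ i j, |A i j| ≤ Δ) (x : ι → ℝ) (hx : 0 ≤ x) (hx0 : x ≠ 0)
    (hAx : A.map (Int.cast : ℤ → ℝ) *ᵥ x = 0) :
    ∃ r : ι → ℤ, r ≠ 0 ∧ 0 ≤ r ∧ A *ᵥ r = 0 ∧ support r ⊆ support x ∧
      ∑ j, r j ≤ (Fintype.card σ + 1)! * Δ ^ Fintype.card σ := by
  classical
  induction x using support_ssubset_induction with
  | h x ih =>
    by_cases hinj : Injective ((A.withOnesRow.map (Int.cast : ℤ → ℝ)).submatrix id
        (Subtype.val : support x → ι)).mulVec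
    · obtain ⟨r, c, hc, hrc, hsum⟩ := exists_int_eq_smul_of_injective hΔ hA hx hx0 hAx hinj
      have hrj : ∀ j, (r j : ℝ) = c * x j := fun j => congrFun hrc j
      refine ⟨r, ?_, fun j => ?_, ?_, fun j hj => ?_, hsum⟩
      · rintro rfl
        exact hx0 (funext fun j => by simpa [hc.ne'] using (hrj j).symm)
      · exact_mod_cast (hrj j).symm ▸ mul_nonneg hc.le (hx j)
      · funext i
        have := congrFun (map_intCast_mulVec (R := ℝ) A r) i
        rw [hrc, mulVec_smul, hAx, smul_zero] at this
        exact Int.cast_eq_zero.1 this.symm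
      · exact fun hxj => hj (by exact_mod_cast ((hrj j).trans (by simp [hxj]) : (r j : ℝ) = 0))
    · obtain ⟨y, hy, hy0, hAy, hss⟩ := exists_support_ssubset_of_not_injective hx hx0 hAx hinj
      obtain ⟨r, hr0, hr, hAr, hrS, hsum⟩ := ih y hss hy hy0 hAy
      exact ⟨r, hr0, hr, hAr, hrS.trans hss.subset, hsum⟩

theorem sum_le_ncard_support_mul_or_exists_int_le [Fintype σ] {Δ : ℤ}
    (hΔ : 1 ≤ Δ) (hA : ∀ i j, |A i j| ≤ Δ)
    (x : ι → ℝ) (hx : 0 ≤ x) (hAx : A.map (Int.cast : ℤ → ℝ) *ᵥ x = 0) :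
    ∑ j, x j ≤ (support x).ncard * ((Fintype.card σ + 1)! * Δ ^ Fintype.card σ : ℤ) ∨
      ∃ r : ι → ℤ, r ≠ 0 ∧ 0 ≤ r ∧ A *ᵥ r = 0 ∧ ∀ j, (r j : ℝ) ≤ x j := by
  set B : ℤ := (Fintype.card σ + 1)! * Δ ^ Fintype.card σ
  induction x using support_ssubset_induction with
  | h x ih =>
    rcases eq_or_ne x 0 with rfl | hx0
    · left
      simp
    obtain ⟨r, hr0, hr, hAr, hrS, hsum⟩ := exists_int_ray_support_subset hΔ hA x hx hx0 hAx
    obtain ⟨j₀, hj₀⟩ := Function.ne_iff.1 hr0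
    obtain ⟨θ, hθ, hx', hss⟩ := exists_pos_sub_smul_nonneg_support_ssubset
      (z := fun j => (r j : ℝ)) hx (fun j hj => hrS (by simpa using hj))
      ⟨j₀, by exact_mod_cast (hr j₀).lt_of_ne' hj₀⟩
    have hrR : ∀ j, (0 : ℝ) ≤ r j := fun j => by exact_mod_cast hr j
    rcases le_or_gt 1 θ with hθ1 | hθ1
    · refine .inr ⟨r, hr0, hr, hAr, fun j => ?_⟩
      have := hx' j
      simp only [Pi.zero_apply, Pi.sub_apply, Pi.smul_apply, smul_eq_mul, sub_nonneg] at this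
      nlinarith [hrR j]
    have hAx' : A.map Int.cast *ᵥ (x - θ • fun j => (r j : ℝ)) = 0 := by
      rw [mulVec_sub, mulVec_smul, hAx, map_intCast_mulVec, hAr]
      ext
      simp
    rcases ih _ hss hx' hAx' with hle | ⟨r', hr'0, hr', hAr', hr'x⟩
    · left
      have hcard : (support (x - θ • fun j => (r j : ℝ))).ncard + 1 ≤ (support x).ncard :=
        Set.ncard_lt_ncard hss
      have hθr : θ * ∑ j, (r j : ℝ) ≤ B := by
        calc θ * ∑ j, (r j : ℝ) ≤ 1 * ∑ j, (r j : ℝ) :=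
              mul_le_mul_of_nonneg_right hθ1.le (sum_nonneg fun j _ => hrR j)
          _ ≤ B := by rw [one_mul]; exact_mod_cast hsum
      have hB : (0 : ℝ) ≤ B := by positivity
      calc ∑ j, x j = ∑ j, (x - θ • fun j => (r j : ℝ)) j + θ * ∑ j, (r j : ℝ) := by
            simp [sum_sub_distrib, mul_sum]
        _ ≤ (support (x - θ • fun j => (r j : ℝ))).ncard * B + B := add_le_add hle hθr
        _ ≤ (support x).ncard * B := by
            rw [← _root_.add_one_mul]
            gcongr
            exact_mod_cast hcard
    · refine .inr ⟨r', hr'0, hr', hAr', fun j => (hr'x j).trans ?_⟩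
      simpa using mul_nonneg hθ.le (hrR j)

end Cone

theorem exists_single_le_of_card_lt_sum {ι : Type*} [Fintype ι] [DecidableEq ι] {w : ι → ℝ}
    (hw : 0 ≤ w) (h : (Fintype.card ι : ℝ) < ∑ j, w j) :
    ∃ j, ∀ j', ((Pi.single j 1 : ι → ℤ) j' : ℝ) ≤ w j' := by
  obtain ⟨j, -, hj⟩ := exists_lt_of_sum_lt (s := univ) (f := fun _ => (1 : ℝ)) (g := w)
    (by simpa using h)
  refine ⟨j, fun j' => ?_⟩
  by_cases h : j' = j
  · subst h; simpa using hj.le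
  · simpa [h] using hw j'

theorem stmt10 (s t : ℕ) (Δ : ℤ) (A : Matrix (Fin s) (Fin t) ℤ)
    (hA : ∀ i j, |A i j| ≤ Δ)
    (w : Fin t → ℝ) (hw_nonneg : ∀ j, 0 ≤ w j)
    (hw_ker : (A.map (Int.cast : ℤ → ℝ)).mulVec w = 0)
    (hw_big : (t : ℝ) * (2 * s * Δ + 1)^s < ∑ j, |w j|) :
    ∃ wbar : Fin t → ℤ, wbar ≠ 0 ∧ (∀ j, 0 ≤ wbar j) ∧
      A.mulVec wbar = 0 ∧ (∀ j, (wbar j : ℝ) ≤ w j) := by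
  simp only [abs_of_nonneg (hw_nonneg _)] at hw_big
  rcases le_or_gt 1 Δ with hΔ | hΔ
  · refine (sum_le_ncard_support_mul_or_exists_int_le hΔ hA w hw_nonneg hw_ker).resolve_left
      fun hle => hw_big.not_ge (hle.trans ?_)
    have hB : (((s + 1)! * Δ ^ s : ℤ) : ℝ) ≤ (2 * s * Δ + 1) ^ s := by
      exact_mod_cast factorial_succ_mul_pow_le s (zero_le_one.trans hΔ)
    have hcard : ((support w).ncard : ℝ) ≤ t := by
      exact_mod_cast (Set.ncard_le_card _).trans_eq (Nat.card_fin t)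
    simp only [Fintype.card_fin]
    gcongr
  have hA0 : A = 0 := ext fun i j => abs_nonpos_iff.1 ((hA i j).trans (by omega))
  have hsΔ : (s : ℝ) * Δ = 0 := by
    rcases s.eq_zero_or_pos with rfl | hs
    · simp
    rcases t.eq_zero_or_pos with rfl | ht
    · simp at hw_big
    have := (abs_nonneg _).trans (hA ⟨0, hs⟩ ⟨0, ht⟩)
    simp [show Δ = 0 by omega]
  obtain ⟨j, hj⟩ := exists_single_le_of_card_lt_sum hw_nonneg
    (by simpa [mul_assoc, hsΔ] using hw_big)
  refine ⟨Pi.single j 1, by simp, fun j' => ?_, by rw [hA0, zero_mulVec], hj⟩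
  by_cases h : j' = j <;> simp [h]
end

section
/- Let V ⊆ ℝ^{s₀} be a linear subspace, let X := (R·[−1,1]^{s₀}) ∩ V and Y := [−ω,ω]^{s₀} for reals R, ω ≥ 0. Then the number of integer points in X + Y is at most 36·(s₀^{1/2}(R+ω+1/2))^{dim V}·(s₀^{1/2}(ω+1/2))^{s₀−dim V}. -/
/-!
The cubes `z + (-1/2, 1/2)^s₀` around the integer points `z` of `X + Y` are disjoint, so their
number is at most the volume of `X + Y + (-1/2, 1/2)^s₀`. A point of that set is `x + u` with
`x ∈ X ⊆ V` and `‖u‖_∞ ≤ ω + 1/2`, so its orthogonal projections to `V` and `Vᗮ` have Euclidean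
norms at most `√s₀ (R + ω + 1/2)` and `√s₀ (ω + 1/2)`. The set therefore lies in a product of two
Euclidean balls, of dimensions `dim V` and `s₀ - dim V`, and a unit ball has volume at most `6` in
every dimension.
-/

open Real MeasureTheory Module Metric Pointwise

noncomputable def unitBallVolume (n : ℕ) : ℝ := √π ^ n / Gamma (n / 2 + 1)

lemma unitBallVolume_zero : unitBallVolume 0 = 1 := by
  simp [unitBallVolume]

lemma unitBallVolume_one : unitBallVolume 1 = 2 := by
  rw [unitBallVolume, Nat.cast_one, show (1 : ℝ) / 2 + 1 = 1 / 2 + 1 by norm_num,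
    Gamma_add_one (by norm_num), Gamma_one_half_eq]
  field_simp

lemma unitBallVolume_add_two (n : ℕ) :
    unitBallVolume (n + 2) = unitBallVolume n * (π / (n / 2 + 1)) := by
  have hn : (n : ℝ) / 2 + 1 ≠ 0 := by positivity
  rw [unitBallVolume, unitBallVolume, pow_add, sq_sqrt pi_nonneg, Nat.cast_add, Nat.cast_two,
    show ((n : ℝ) + 2) / 2 + 1 = (n / 2 + 1) + 1 by ring, Gamma_add_one hn]
  field_simp

/-- The maximum, `8π²/15 ≈ 5.26`, is attained in dimension `5`; from there on the recurrence
factor `π / (n / 2 + 1)` is below `1`. -/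
lemma unitBallVolume_le_six : ∀ n, unitBallVolume n ≤ 6
  | 0 => by rw [unitBallVolume_zero]; norm_num
  | 1 => by rw [unitBallVolume_one]; norm_num
  | 2 => by
    rw [unitBallVolume_add_two 0, unitBallVolume_zero]
    norm_num; linarith [pi_lt_d2]
  | 3 => by
    rw [unitBallVolume_add_two 1, unitBallVolume_one]
    norm_num; linarith [pi_lt_d2]
  | 4 => by
    rw [unitBallVolume_add_two 2, unitBallVolume_add_two 0, unitBallVolume_zero]
    norm_num; nlinarith [pi_lt_d2, pi_pos]
  | 5 => by
    rw [unitBallVolume_add_two 3, unitBallVolume_add_two 1, unitBallVolume_one]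
    norm_num; nlinarith [pi_lt_d2, pi_pos]
  | 6 => by
    rw [unitBallVolume_add_two 4, unitBallVolume_add_two 2, unitBallVolume_add_two 0,
      unitBallVolume_zero]
    norm_num; nlinarith [pi_lt_d2, pi_pos]
  | n + 7 => by
    have hfactor : π / ((n + 5 : ℕ) / 2 + 1) ≤ 1 := by
      rw [div_le_one (by positivity)]
      push_cast
      linarith [pi_lt_d2, (n.cast_nonneg : (0 : ℝ) ≤ n)]
    have hnonneg : 0 ≤ unitBallVolume (n + 5) :=
      div_nonneg (by positivity) (Gamma_pos_of_pos (by positivity)).le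
    calc unitBallVolume (n + 7) = unitBallVolume (n + 5) * (π / ((n + 5 : ℕ) / 2 + 1)) :=
          unitBallVolume_add_two (n + 5)
      _ ≤ unitBallVolume (n + 5) := mul_le_of_le_one_right hnonneg hfactor
      _ ≤ 6 := unitBallVolume_le_six (n + 5)

section InnerProductSpace

variable {E : Type*} [NormedAddCommGroup E] [InnerProductSpace ℝ E]

namespace Submodule

variable (K : Submodule ℝ E) [K.HasOrthogonalProjection]

/-- The Minkowski sum `(K ∩ closedBall 0 r₁) + (Kᗮ ∩ closedBall 0 r₂)`. -/
def cylinder (r₁ r₂ : ℝ) : Set E :=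
  {x | ‖K.orthogonalProjectionOnto x‖ ≤ r₁ ∧ ‖Kᗮ.orthogonalProjectionOnto x‖ ≤ r₂}

theorem add_mem_cylinder {x : E} (u : E) (hx : x ∈ K) {r₁ r₂ : ℝ}
    (h₁ : ‖x‖ + ‖u‖ ≤ r₁) (h₂ : ‖u‖ ≤ r₂) : x + u ∈ K.cylinder r₁ r₂ := by
  refine ⟨?_, ?_⟩
  · calc ‖K.orthogonalProjectionOnto (x + u)‖ ≤ ‖x + u‖ :=
          K.norm_orthogonalProjectionOnto_apply_le _
      _ ≤ ‖x‖ + ‖u‖ := norm_add_le x u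
      _ ≤ r₁ := h₁
  · rw [map_add, K.orthogonalProjectionOnto_orthogonal_apply_eq_zero hx, zero_add]
    exact (Kᗮ.norm_orthogonalProjectionOnto_apply_le u).trans h₂

end Submodule

variable [FiniteDimensional ℝ E] [MeasurableSpace E] [BorelSpace E]

theorem volume_closedBall_le_six_mul_pow (x : E) {r : ℝ} (hr : 0 ≤ r) :
    volume (closedBall x r) ≤ ENNReal.ofReal (6 * r ^ finrank ℝ E) := by
  rcases subsingleton_or_nontrivial E with hE | hE
  · let b := stdOrthonormalBasis ℝ E
    calc volume (closedBall x r) ≤ volume (parallelepiped b) := measure_mono fun y _ =>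
          (mem_parallelepiped_iff _ _).2 ⟨0, Set.left_mem_Icc.2 zero_le_one, Subsingleton.elim _ _⟩
      _ = 1 := b.volume_parallelepiped
      _ ≤ ENNReal.ofReal (6 * r ^ finrank ℝ E) := by
          rw [finrank_zero_of_subsingleton, pow_zero, mul_one]
          norm_num
  · rw [InnerProductSpace.volume_closedBall, ← ENNReal.ofReal_pow hr,
      ← ENNReal.ofReal_mul (by positivity), mul_comm]
    gcongr
    exact unitBallVolume_le_six _

theorem Submodule.volume_cylinder_le (K : Submodule ℝ E) {r₁ r₂ : ℝ} (hr₁ : 0 ≤ r₁)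
    (hr₂ : 0 ≤ r₂) :
    volume (K.cylinder r₁ r₂) ≤ ENNReal.ofReal (36 * r₁ ^ finrank ℝ K * r₂ ^ finrank ℝ Kᗮ) := by
  have hdecomp : MeasurePreserving (WithLp.ofLp ∘ K.orthogonalDecomposition) :=
    (WithLp.volume_preserving_ofLp K Kᗮ).comp K.orthogonalDecomposition.measurePreserving
  have hcylinder : K.cylinder r₁ r₂
      = (WithLp.ofLp ∘ K.orthogonalDecomposition) ⁻¹' (closedBall 0 r₁ ×ˢ closedBall 0 r₂) := by
    ext x
    simp [cylinder]
  rw [hcylinder, hdecomp.measure_preimage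
    (measurableSet_closedBall.prod measurableSet_closedBall).nullMeasurableSet,
    Measure.volume_eq_prod, Measure.prod_prod]
  calc volume (closedBall (0 : K) r₁) * volume (closedBall (0 : Kᗮ) r₂)
      ≤ ENNReal.ofReal (6 * r₁ ^ finrank ℝ K) * ENNReal.ofReal (6 * r₂ ^ finrank ℝ Kᗮ) :=
        mul_le_mul' (volume_closedBall_le_six_mul_pow 0 hr₁)
          (volume_closedBall_le_six_mul_pow 0 hr₂)
    _ = ENNReal.ofReal (36 * r₁ ^ finrank ℝ K * r₂ ^ finrank ℝ Kᗮ) := by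
        rw [← ENNReal.ofReal_mul (by positivity)]
        ring_nf

end InnerProductSpace

theorem EuclideanSpace.norm_toLp_le {ι : Type*} [Fintype ι] (u : ι → ℝ) :
    ‖WithLp.toLp 2 u‖ ≤ √(Fintype.card ι) * ‖u‖ := by
  rw [EuclideanSpace.norm_eq, ← sqrt_sq (norm_nonneg u), ← sqrt_mul (Nat.cast_nonneg _)]
  gcongr
  calc ∑ i, ‖u i‖ ^ 2 ≤ ∑ _i : ι, ‖u‖ ^ 2 := by gcongr; exact norm_le_pi_norm u _
    _ = Fintype.card ι * ‖u‖ ^ 2 := by simp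

/-- The open sup-norm balls of radius `1/2` around distinct integer points are disjoint unit
cubes. -/
theorem ncard_le_volume_of_ball_subset {ι : Type*} [Fintype ι] {T : Set (ι → ℤ)}
    {S : Set (ι → ℝ)} (hS : ∀ z ∈ T, ball (fun i => (z i : ℝ)) (1 / 2) ⊆ S) :
    (T.ncard : ENNReal) ≤ volume S := by
  by_cases hT : T.Finite
  swap
  · simp [Set.Infinite.ncard hT]
  have hdisj : T.PairwiseDisjoint fun z => ball (fun i => (z i : ℝ)) (1 / 2) := by
    intro z _ z' _ hne
    obtain ⟨i, hi⟩ := Function.ne_iff.mp hne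
    refine ball_disjoint_ball ?_
    calc (1 / 2 + 1 / 2 : ℝ) = 1 := by norm_num
      _ ≤ dist (z i) (z' i) := Int.pairwise_one_le_dist hi
      _ = dist (z i : ℝ) (z' i) := (Int.dist_cast_real _ _).symm
      _ ≤ dist (fun i => (z i : ℝ)) (fun i => (z' i : ℝ)) :=
          dist_le_pi_dist (fun i => (z i : ℝ)) (fun i => (z' i : ℝ)) i
  calc (T.ncard : ENNReal) = ∑ z ∈ hT.toFinset, volume (ball (fun i => (z i : ℝ)) (1 / 2)) := by
        simp [Set.ncard_eq_toFinset_card T hT]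
    _ = volume (⋃ z ∈ hT.toFinset, ball (fun i => (z i : ℝ)) (1 / 2)) :=
        (measure_biUnion_finset (by simpa using hdisj) fun _ _ => measurableSet_ball).symm
    _ ≤ volume S := measure_mono <| Set.iUnion₂_subset fun z hz => hS z (by simpa using hz)

theorem ball_add_subset_preimage_cylinder {ι : Type*} [Fintype ι]
    (K : Submodule ℝ (EuclideanSpace ℝ ι)) {x y : ι → ℝ} (hxK : WithLp.toLp 2 x ∈ K) {R ω : ℝ}
    (hx : ‖x‖ ≤ R) (hy : ‖y‖ ≤ ω) :
    ball (x + y) (1 / 2) ⊆ WithLp.toLp 2 ⁻¹'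
      K.cylinder (√(Fintype.card ι) * (R + ω + 1 / 2)) (√(Fintype.card ι) * (ω + 1 / 2)) := by
  intro w hw
  have hu : ‖w - x‖ ≤ ω + 1 / 2 :=
    calc ‖w - x‖ = ‖y + (w - (x + y))‖ := by congr 1; abel
      _ ≤ ‖y‖ + ‖w - (x + y)‖ := norm_add_le _ _
      _ ≤ ω + 1 / 2 := add_le_add hy (mem_ball_iff_norm.1 hw).le
  rw [Set.mem_preimage, ← add_sub_cancel x w, WithLp.toLp_add]
  refine K.add_mem_cylinder _ hxK ?_ ((EuclideanSpace.norm_toLp_le _).trans (by gcongr))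
  calc ‖WithLp.toLp 2 x‖ + ‖WithLp.toLp 2 (w - x)‖
      ≤ √(Fintype.card ι) * ‖x‖ + √(Fintype.card ι) * ‖w - x‖ :=
        add_le_add (EuclideanSpace.norm_toLp_le x) (EuclideanSpace.norm_toLp_le _)
    _ ≤ √(Fintype.card ι) * (R + ω + 1 / 2) := by
        rw [add_assoc R, mul_add _ R]
        gcongr

theorem stmt15 (s₀ : ℕ) (V : Submodule ℝ (Fin s₀ → ℝ)) (R ω : ℝ)
    (hR : 0 ≤ R) (hω : 0 ≤ ω)
    (X : Set (Fin s₀ → ℝ)) (hX : X = {x | x ∈ V ∧ ∀ i, |x i| ≤ R})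
    (Y : Set (Fin s₀ → ℝ)) (hY : Y = {y | ∀ i, |y i| ≤ ω}) :
    ((Set.ncard {z : Fin s₀ → ℤ | (fun i => (z i : ℝ)) ∈ X + Y}) : ℝ)
      ≤ 36 * (Real.sqrt s₀ * (R + ω + 1/2))^(Module.finrank ℝ V)
          * (Real.sqrt s₀ * (ω + 1/2))^(s₀ - Module.finrank ℝ V) := by
  subst hX hY
  let K : Submodule ℝ (EuclideanSpace ℝ (Fin s₀)) :=
    V.map (WithLp.linearEquiv 2 ℝ (Fin s₀ → ℝ)).symm.toLinearMap
  have hK : finrank ℝ K = finrank ℝ V := LinearEquiv.finrank_map_eq _ V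
  have hKperp : finrank ℝ Kᗮ = s₀ - finrank ℝ V := by
    have := K.finrank_add_finrank_orthogonal
    rw [finrank_euclideanSpace_fin] at this
    omega
  let S : Set (Fin s₀ → ℝ) :=
    WithLp.toLp 2 ⁻¹' K.cylinder (√s₀ * (R + ω + 1/2)) (√s₀ * (ω + 1/2))
  have hS : volume S ≤ ENNReal.ofReal (36 * (√s₀ * (R + ω + 1/2)) ^ finrank ℝ V
      * (√s₀ * (ω + 1/2)) ^ (s₀ - finrank ℝ V)) := by
    rw [← hKperp, ← hK]
    exact ((EuclideanSpace.volume_preserving_symm_measurableEquiv_toLp (Fin s₀)).symm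
      |>.measure_preimage_equiv _).le.trans (K.volume_cylinder_le (by positivity) (by positivity))
  refine (ENNReal.ofReal_le_ofReal_iff (by positivity)).1 ?_
  rw [ENNReal.ofReal_natCast]
  refine (ncard_le_volume_of_ball_subset ?_).trans hS
  rintro z ⟨x, ⟨hxV, hxR⟩, y, hyω, hxy : x + y = _⟩
  rw [← hxy]
  simpa only [Fintype.card_fin] using ball_add_subset_preimage_cylinder K
    (Submodule.mem_map_of_mem hxV)
    ((pi_norm_le_iff_of_nonneg hR).2 fun i => (norm_eq_abs _).trans_le (hxR i))
    ((pi_norm_le_iff_of_nonneg hω).2 fun i => (norm_eq_abs _).trans_le (hyω i))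
end
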